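/- arXiv:1709.09626 — 5 statements merged into one kernel-verified Lean document; each statement's English description precedes it below -/
import Mathlib

section
/- Let m, n ≥ 1. Every K_{m,n}-free incidence structure M embeds, as an induced substructure, into a K_{m,n}-free incidence structure N in which every m pairwise distinct points are simultaneously incident to exactly n−1 pairwise distinct lines and every n pairwise distinct lines are simultaneously incident to exactly m−1 pairwise distinct points. -/
universe u v

/-- An incidence structure on the type `M`: "points" and "lines" partition `M`,
and incidence only holds between a point and a line. -/
structure IncidenceData (M : Type u) where
  pt : M → Prop
  ln : M → Prop
  inc : M → M → Prop
  pt_or_ln : ∀ z, pt z ∨ ln z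
  not_pt_and_ln : ∀ z, ¬(pt z ∧ ln z)
  inc_pt_ln : ∀ x y, inc x y → pt x ∧ ln y

/-- `K_{m,n}`-freeness: there are no `m` pairwise distinct points and `n` pairwise
distinct lines with every one of the points incident to every one of the lines. -/
def KFree (m n : ℕ) {M : Type u} (S : IncidenceData M) : Prop :=
  ¬∃ (a : Fin m → M) (b : Fin n → M),
      Function.Injective a ∧ Function.Injective b ∧
      (∀ i, S.pt (a i)) ∧ (∀ j, S.ln (b j)) ∧ ∀ i j, S.inc (a i) (b j)

inductive Pre (M : Type u) (m n : ℕ) : Type u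
  | base : M → Pre M m n
  | fl : (Fin m → Pre M m n) → ℕ → Pre M m n
  | fp : (Fin n → Pre M m n) → ℕ → Pre M m n

namespace Pre

variable {M : Type u} {m n : ℕ}

noncomputable instance : LinearOrder (Pre M m n) := IsWellOrder.linearOrder WellOrderingRel

def height : Pre M m n → ℕ
  | base _ => 0
  | fl a _ => (Finset.univ.sup fun i => (a i).height) + 1
  | fp b _ => (Finset.univ.sup fun j => (b j).height) + 1

/-- sup of heights of a tuple -/
def supT {k : ℕ} (a : Fin k → Pre M m n) : ℕ := Finset.univ.sup fun i => (a i).height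

lemma height_fl (a : Fin m → Pre M m n) (j : ℕ) : height (fl a j) = supT a + 1 := rfl

lemma height_fp (b : Fin n → Pre M m n) (i : ℕ) : height (fp b i) = supT b + 1 := rfl

lemma height_le_supT {k : ℕ} (a : Fin k → Pre M m n) (i : Fin k) : height (a i) ≤ supT a :=
  Finset.le_sup (f := fun i => (a i).height) (Finset.mem_univ i)

lemma height_lt_of_mem_range {k : ℕ} {a : Fin k → Pre M m n} {y : Pre M m n}
    (h : y ∈ Set.range a) : height y < supT a + 1 := by
  obtain ⟨i, rfl⟩ := h
  exact Nat.lt_succ_of_le (height_le_supT a i)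

variable (S : IncidenceData M)

def isPt : Pre M m n → Prop
  | base x => S.pt x
  | fl _ _ => False
  | fp _ _ => True

def isLn : Pre M m n → Prop
  | base x => S.ln x
  | fl _ _ => True
  | fp _ _ => False

def incRaw (x y : Pre M m n) : Prop :=
  (∃ p l, x = base p ∧ y = base l ∧ S.inc p l) ∨
  (∃ a j, y = fl a j ∧ x ∈ Set.range a) ∨
  (∃ b i, x = fp b i ∧ y ∈ Set.range b)

/-- lines through all of `a`, among `W` -/
def LS (W : Pre M m n → Prop) (a : Fin m → Pre M m n) : Set (Pre M m n) :=
  {y | W y ∧ isLn S y ∧ ∀ i, incRaw S (a i) y}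

/-- points on all of `b`, among `W` -/
def PS (W : Pre M m n → Prop) (b : Fin n → Pre M m n) : Set (Pre M m n) :=
  {x | W x ∧ isPt S x ∧ ∀ j, incRaw S x (b j)}

def Ok (W : Pre M m n → Prop) : Pre M m n → Prop
  | base _ => True
  | fl a j => (∀ i, W (a i)) ∧ (∀ i, isPt S (a i)) ∧ StrictMono a ∧
      (LS S W a).Finite ∧ j + (LS S W a).ncard + 2 ≤ n
  | fp b i => (∀ j, W (b j)) ∧ (∀ j, isLn S (b j)) ∧ StrictMono b ∧
      (PS S W b).Finite ∧ i + (PS S W b).ncard + 2 ≤ m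

def V : ℕ → Pre M m n → Prop
  | 0 => fun _ => False
  | (h+1) => fun z => V h z ∨ (z.height = h ∧ Ok S (V h) z)

lemma V_iff : ∀ (h : ℕ) (z : Pre M m n), V S h z ↔ (z.height < h ∧ V S (z.height + 1) z) := by
  intro h
  induction h with
  | zero => intro z; simp [V]
  | succ h ih =>
    intro z
    constructor
    · rintro (hz | ⟨hh, hok⟩)
      · exact ⟨Nat.lt_succ_of_lt ((ih z).1 hz).1, ((ih z).1 hz).2⟩
      · subst hh; exact ⟨Nat.lt_succ_self _, Or.inr ⟨rfl, hok⟩⟩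
    · rintro ⟨hlt, hv⟩
      rcases Nat.lt_succ_iff_lt_or_eq.1 hlt with h' | h'
      · exact Or.inl ((ih z).2 ⟨h', hv⟩)
      · subst h'; exact hv

def valid (z : Pre M m n) : Prop := V S (z.height + 1) z

lemma V_iff' (h : ℕ) (z : Pre M m n) : V S h z ↔ (z.height < h ∧ valid S z) := V_iff S h z

lemma valid_iff_Ok (z : Pre M m n) : valid S z ↔ Ok S (V S z.height) z := by
  unfold valid
  show V S (z.height + 1) z ↔ _
  constructor
  · rintro (hz | ⟨_, hok⟩)
    · exact absurd ((V_iff' S _ z).1 hz).1 (lt_irrefl _)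
    · exact hok
  · intro hok; exact Or.inr ⟨rfl, hok⟩

lemma valid_base (x : M) : valid S (base x : Pre M m n) := by
  rw [valid_iff_Ok]; trivial

/-- all valid lines of height ≤ supT a through all of a -/
def LSet (a : Fin m → Pre M m n) : Set (Pre M m n) :=
  {y | height y ≤ supT a ∧ valid S y ∧ isLn S y ∧ ∀ i, incRaw S (a i) y}

def PSet (b : Fin n → Pre M m n) : Set (Pre M m n) :=
  {x | height x ≤ supT b ∧ valid S x ∧ isPt S x ∧ ∀ j, incRaw S x (b j)}

lemma LS_eq (a : Fin m → Pre M m n) : LS S (V S (supT a + 1)) a = LSet S a := by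
  ext y
  simp only [LS, LSet, Set.mem_setOf_eq, V_iff' S (supT a + 1) y, Nat.lt_succ_iff]
  tauto

lemma PS_eq (b : Fin n → Pre M m n) : PS S (V S (supT b + 1)) b = PSet S b := by
  ext x
  simp only [PS, PSet, Set.mem_setOf_eq, V_iff' S (supT b + 1) x, Nat.lt_succ_iff]
  tauto

lemma valid_fl (a : Fin m → Pre M m n) (j : ℕ) :
    valid S (fl a j) ↔ (∀ i, valid S (a i)) ∧ (∀ i, isPt S (a i)) ∧ StrictMono a ∧
      (LSet S a).Finite ∧ j + (LSet S a).ncard + 2 ≤ n := by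
  rw [valid_iff_Ok]
  show ((∀ i, V S (height (fl a j)) (a i)) ∧ _ ∧ _ ∧ (LS S (V S (height (fl a j))) a).Finite ∧
      j + (LS S (V S (height (fl a j))) a).ncard + 2 ≤ n) ↔ _
  rw [height_fl, LS_eq]
  constructor
  · rintro ⟨h1, h2, h3, h4, h5⟩
    exact ⟨fun i => ((V_iff' S _ _).1 (h1 i)).2, h2, h3, h4, h5⟩
  · rintro ⟨h1, h2, h3, h4, h5⟩
    refine ⟨fun i => (V_iff' S _ _).2 ⟨Nat.lt_succ_of_le (height_le_supT a i), h1 i⟩, h2, h3, h4, h5⟩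

lemma valid_fp (b : Fin n → Pre M m n) (i : ℕ) :
    valid S (fp b i) ↔ (∀ j, valid S (b j)) ∧ (∀ j, isLn S (b j)) ∧ StrictMono b ∧
      (PSet S b).Finite ∧ i + (PSet S b).ncard + 2 ≤ m := by
  rw [valid_iff_Ok]
  show ((∀ j, V S (height (fp b i)) (b j)) ∧ _ ∧ _ ∧ (PS S (V S (height (fp b i))) b).Finite ∧
      i + (PS S (V S (height (fp b i))) b).ncard + 2 ≤ m) ↔ _
  rw [height_fp, PS_eq]
  constructor
  · rintro ⟨h1, h2, h3, h4, h5⟩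
    exact ⟨fun j => ((V_iff' S _ _).1 (h1 j)).2, h2, h3, h4, h5⟩
  · rintro ⟨h1, h2, h3, h4, h5⟩
    refine ⟨fun j => (V_iff' S _ _).2 ⟨Nat.lt_succ_of_le (height_le_supT b j), h1 j⟩, h2, h3, h4, h5⟩

end Pre

section Helpers

variable {α : Type u}

lemma small_of_no_inj (s : Set α) (k : ℕ)
    (h : ∀ f : Fin k → α, Function.Injective f → (∀ i, f i ∈ s) → False) :
    s.Finite ∧ s.ncard + 1 ≤ k := by
  have key : ∀ t : Set α, t ⊆ s → t.Finite → t.ncard ≠ k := by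
    intro t hts htf htc
    haveI := htf.fintype
    have hcard : Fintype.card t = k := by
      rw [← htc, Set.ncard_eq_toFinset_card', Set.toFinset_card]
    let e := (Fintype.equivFinOfCardEq hcard).symm
    exact h (fun i => (e i : α)) (fun i j hij => e.injective (Subtype.ext hij))
      (fun i => hts (e i).2)
  have hfin : s.Finite := by
    by_contra hinf
    obtain ⟨t, hts, htf, htc⟩ := Set.Infinite.exists_subset_ncard_eq hinf k
    exact key t hts htf htc
  refine ⟨hfin, ?_⟩
  by_contra hc
  push_neg at hc
  obtain ⟨t, hts, htc⟩ := Set.exists_subset_card_eq (s := s) (n := k) (by omega)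
  exact key t hts (hfin.subset hts) htc

lemma exists_fun_of_ncard {s : Set α} (hs : s.Finite) :
    ∃ g : Fin s.ncard → α, Function.Injective g ∧ Set.range g = s := by
  haveI := hs.fintype
  have hcard : Fintype.card s = s.ncard := by
    rw [Set.ncard_eq_toFinset_card', Set.toFinset_card]
  let e := (Fintype.equivFinOfCardEq hcard).symm
  refine ⟨fun i => (e i : α), fun i j hij => e.injective (Subtype.ext hij), ?_⟩
  ext x
  constructor
  · rintro ⟨i, rfl⟩; exact (e i).2
  · intro hx; exact ⟨e.symm ⟨x, hx⟩, by simp⟩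

lemma sort_tuple [LinearOrder α] {k : ℕ} (a : Fin k → α) (ha : Function.Injective a) :
    ∃ a' : Fin k → α, StrictMono a' ∧ Set.range a' = Set.range a := by
  classical
  let t := Finset.univ.image a
  have hc : t.card = k := by
    rw [Finset.card_image_of_injective _ ha, Finset.card_univ, Fintype.card_fin]
  let e := t.orderIsoOfFin hc
  refine ⟨fun i => (e i : α), fun i j hij => Subtype.coe_lt_coe.mpr (e.strictMono hij), ?_⟩
  have ht : (t : Set α) = Set.range a := by
    simp [t, Finset.coe_image]
  rw [← ht]
  ext x
  constructor
  · rintro ⟨i, rfl⟩; exact (e i).2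
  · intro hx; exact ⟨e.symm ⟨x, hx⟩, by simp⟩

lemma ncard_range_fin {k : ℕ} (f : Fin k → α) (hf : Function.Injective f) :
    (Set.range f).ncard = k := by
  classical
  have : Set.range f = ↑(Finset.univ.image f) := by simp [Finset.coe_image]
  rw [this, Set.ncard_coe_finset, Finset.card_image_of_injective _ hf, Finset.card_univ,
    Fintype.card_fin]

end Helpers

namespace Pre

variable {M : Type u} {m n : ℕ} (S : IncidenceData M)

lemma keyL (a : Fin m → Pre M m n) (hsm : StrictMono a) {y : Pre M m n}
    (hy : valid S y) (hln : isLn S y) (hinc : ∀ i, incRaw S (a i) y) :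
    (∃ j, y = fl a j) ∨ height y ≤ supT a := by
  classical
  cases y with
  | base l => exact Or.inr (Nat.zero_le _)
  | fp b i => exact absurd hln (by simp [isLn])
  | fl a'' j'' =>
    by_cases hall : ∀ i, a i ∈ Set.range a''
    · have hsm'' : StrictMono a'' := ((valid_fl S a'' j'').1 hy).2.2.1
      have hsub : Set.range a ⊆ Set.range a'' := by rintro x ⟨i, rfl⟩; exact hall i
      have heq : Set.range a = Set.range a'' := Set.eq_of_subset_of_ncard_le hsub
        (by rw [ncard_range_fin _ hsm''.injective, ncard_range_fin _ hsm.injective])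
        (Set.finite_range _)
      haveI : WellFoundedLT (Fin m) := inferInstance
      have hae : a = a'' := (StrictMono.range_inj hsm hsm'').1 heq
      exact Or.inl ⟨j'', by rw [hae]⟩
    · push_neg at hall
      obtain ⟨i, hi⟩ := hall
      rcases hinc i with ⟨p, l, _, hyb, _⟩ | ⟨a₂, j₂, hyf, hmem⟩ | ⟨bb, k, hxi, hmem⟩
      · exact absurd hyb (by simp)
      · injection hyf with h1 h2
        subst h1
        exact absurd hmem hi
      · right
        have h1 : height (fl a'' j'' : Pre M m n) < supT bb + 1 := height_lt_of_mem_range hmem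
        have h2 : height (a i) = supT bb + 1 := by rw [hxi, height_fp]
        have h3 : height (a i) ≤ supT a := height_le_supT a i
        omega

lemma keyP (b : Fin n → Pre M m n) (hsm : StrictMono b) {x : Pre M m n}
    (hx : valid S x) (hpt : isPt S x) (hinc : ∀ j, incRaw S x (b j)) :
    (∃ i, x = fp b i) ∨ height x ≤ supT b := by
  classical
  cases x with
  | base p => exact Or.inr (Nat.zero_le _)
  | fl a j => exact absurd hpt (by simp [isPt])
  | fp b'' i'' =>
    by_cases hall : ∀ j, b j ∈ Set.range b''
    · have hsm'' : StrictMono b'' := ((valid_fp S b'' i'').1 hx).2.2.1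
      have hsub : Set.range b ⊆ Set.range b'' := by rintro y ⟨j, rfl⟩; exact hall j
      have heq : Set.range b = Set.range b'' := Set.eq_of_subset_of_ncard_le hsub
        (by rw [ncard_range_fin _ hsm''.injective, ncard_range_fin _ hsm.injective])
        (Set.finite_range _)
      haveI : WellFoundedLT (Fin n) := inferInstance
      have hbe : b = b'' := (StrictMono.range_inj hsm hsm'').1 heq
      exact Or.inl ⟨i'', by rw [hbe]⟩
    · push_neg at hall
      obtain ⟨j, hj⟩ := hall
      rcases hinc j with ⟨p, l, hxb, _, _⟩ | ⟨a₂, j₂, hyf, hmem⟩ | ⟨bb, k, hxi, hmem⟩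
      · exact absurd hxb (by simp)
      · right
        have h1 : height (fp b'' i'' : Pre M m n) < supT a₂ + 1 := height_lt_of_mem_range hmem
        have h2 : height (b j) = supT a₂ + 1 := by rw [hyf, height_fl]
        have h3 : height (b j) ≤ supT b := height_le_supT b j
        omega
      · injection hxi with h1 h2
        subst h1
        exact absurd hmem hj

lemma KFreeRaw (hm : 1 ≤ m) (hn : 1 ≤ n) (hS : KFree m n S) :
    ¬∃ (a : Fin m → Pre M m n) (b : Fin n → Pre M m n),
      Function.Injective a ∧ Function.Injective b ∧
      (∀ i, valid S (a i) ∧ isPt S (a i)) ∧ (∀ j, valid S (b j) ∧ isLn S (b j)) ∧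
      ∀ i j, incRaw S (a i) (b j) := by
  classical
  rintro ⟨a, b, hainj, hbinj, ha, hb, hinc⟩
  haveI : Nonempty (Fin m) := ⟨⟨0, hm⟩⟩
  haveI : Nonempty (Fin n) := ⟨⟨0, hn⟩⟩
  set hp := Finset.univ.sup (fun i => height (a i)) with hhp
  set hl := Finset.univ.sup (fun j => height (b j)) with hhl
  by_cases h0 : hp = 0 ∧ hl = 0
  · -- everything is a base element
    obtain ⟨hp0, hl0⟩ := h0
    have hab : ∀ i, ∃ p, a i = base p := by
      intro i
      have hle : height (a i) ≤ hp := by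
        rw [hhp]; exact Finset.le_sup (f := fun i => height (a i)) (Finset.mem_univ i)
      have hha : height (a i) = 0 := by omega
      cases hxx : a i with
      | base p => exact ⟨p, rfl⟩
      | fl a' j' => rw [hxx, height_fl] at hha; omega
      | fp b' i' => rw [hxx, height_fp] at hha; omega
    have hbb : ∀ j, ∃ l, b j = base l := by
      intro j
      have hle : height (b j) ≤ hl := by
        rw [hhl]; exact Finset.le_sup (f := fun j => height (b j)) (Finset.mem_univ j)
      have hha : height (b j) = 0 := by omega
      cases hxx : b j with
      | base p => exact ⟨p, rfl⟩
      | fl a' j' => rw [hxx, height_fl] at hha; omega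
      | fp b' i' => rw [hxx, height_fp] at hha; omega
    choose p hp' using hab
    choose l hl' using hbb
    apply hS
    refine ⟨p, l, ?_, ?_, ?_, ?_, ?_⟩
    · intro i j hij
      apply hainj
      rw [hp' i, hp' j, hij]
    · intro i j hij
      apply hbinj
      rw [hl' i, hl' j, hij]
    · intro i
      have := (ha i).2
      rw [hp' i] at this
      exact this
    · intro j
      have := (hb j).2
      rw [hl' j] at this
      exact this
    · intro i j
      have := hinc i j
      rw [hp' i, hl' j] at this
      rcases this with ⟨p₂, l₂, he1, he2, hi⟩ | ⟨a₂, j₂, he, _⟩ | ⟨b₂, i₂, he, _⟩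
      · injection he1 with e1; injection he2 with e2; rw [e1, e2]; exact hi
      · exact absurd he (by simp)
      · exact absurd he (by simp)
  · by_cases hcmp : hp ≤ hl
    · -- some line has maximal height; it is a formal line
      have hl1 : 1 ≤ hl := by
        rcases Nat.eq_zero_or_pos hl with h | h
        · exact absurd ⟨by omega, h⟩ h0
        · exact h
      obtain ⟨j0, -, hj0⟩ := Finset.exists_mem_eq_sup Finset.univ Finset.univ_nonempty
        (fun j => height (b j))
      rw [← hhl] at hj0
      cases hB : b j0 with
      | base p => rw [hB] at hj0; simp [height] at hj0; omega
      | fp bb ii =>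
        have := (hb j0).2
        rw [hB] at this
        exact absurd this (by simp [isLn])
      | fl a'' j'' =>
        have hv : valid S (fl a'' j'' : Pre M m n) := hB ▸ (hb j0).1
        obtain ⟨hva, hpa, hsm'', hfin'', hcnt''⟩ := (valid_fl S a'' j'').1 hv
        have hHa : supT a'' + 1 = hl := by rw [hj0, hB, height_fl]
        -- every point of a lies in range a''
        have hmem : ∀ i, a i ∈ Set.range a'' := by
          intro i
          have := hinc i j0
          rw [hB] at this
          rcases this with ⟨p₂, l₂, _, he, _⟩ | ⟨a₂, j₂, he, hmm⟩ | ⟨b₂, i₂, he, hmm⟩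
          · exact absurd he (by simp)
          · injection he with e1 e2; subst e1; exact hmm
          · -- a i = fp b₂ i₂ and fl a'' j'' ∈ range b₂ : impossible by heights
            exfalso
            have h1 : height (fl a'' j'' : Pre M m n) < supT b₂ + 1 :=
              height_lt_of_mem_range hmm
            have h2 : height (a i) = supT b₂ + 1 := by rw [he, height_fp]
            have h3 : height (a i) ≤ hp := by
              rw [hhp]; exact Finset.le_sup (f := fun i => height (a i)) (Finset.mem_univ i)
            have h4 : height (fl a'' j'' : Pre M m n) = hl := by rw [hj0, hB]
            omega
        have hsub : Set.range a ⊆ Set.range a'' := by rintro x ⟨i, rfl⟩; exact hmem i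
        have heq : Set.range a = Set.range a'' := Set.eq_of_subset_of_ncard_le hsub
          (by rw [ncard_range_fin _ hsm''.injective, ncard_range_fin _ hainj])
          (Set.finite_range _)
        -- all lines pass through all of a''
        have hinc'' : ∀ j i, incRaw S (a'' i) (b j) := by
          intro j i
          have : a'' i ∈ Set.range a := heq ▸ Set.mem_range_self i
          obtain ⟨k, hk⟩ := this
          rw [← hk]
          exact hinc k j
        set c := (LSet S a'').ncard with hc
        -- build an injection from Fin n to a set of size ≤ n - 1
        have hbmem : ∀ j, (¬∃ j', b j = fl a'' j') → b j ∈ (LSet S a'') := by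
          intro j hnot
          have hk := keyL S a'' hsm'' (hb j).1 (hb j).2 (hinc'' j)
          rcases hk with h | h
          · exact absurd h hnot
          · exact ⟨h, (hb j).1, (hb j).2, hinc'' j⟩
        have hjlt : ∀ j', valid S (fl a'' j' : Pre M m n) → j' < n - c - 1 := by
          intro j' hv'
          have := ((valid_fl S a'' j').1 hv').2.2.2.2
          omega
        let F : Fin n → (hfin''.toFinset) ⊕ (Fin (n - c - 1)) := fun j =>
          if h : ∃ j', b j = fl a'' j' then
            Sum.inr ⟨h.choose, hjlt _ (h.choose_spec ▸ (hb j).1)⟩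
          else
            Sum.inl ⟨b j, hfin''.mem_toFinset.mpr (hbmem j h)⟩
        have hFinj : Function.Injective F := by
          intro j k hjk
          by_cases h1 : ∃ j', b j = fl a'' j' <;> by_cases h2 : ∃ j', b k = fl a'' j' <;>
            simp only [F, dif_pos, dif_neg, h1, h2] at hjk
          · apply hbinj
            rw [h1.choose_spec, h2.choose_spec]
            have := Sum.inr.inj hjk
            have := Fin.mk.inj_iff.1 this
            rw [this]
          · exact absurd hjk (by simp)
          · exact absurd hjk (by simp)
          · exact hbinj (Subtype.mk.inj (Sum.inl.inj hjk))
        have hcard := Fintype.card_le_of_injective F hFinj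
        rw [Fintype.card_fin, Fintype.card_sum, Fintype.card_coe, Fintype.card_fin] at hcard
        have htc : hfin''.toFinset.card = c := by
          rw [hc, Set.ncard_eq_toFinset_card _ hfin'']
        omega
    · -- some point has maximal height; it is a formal point
      have hp1 : 1 ≤ hp := by omega
      obtain ⟨i0, -, hi0⟩ := Finset.exists_mem_eq_sup Finset.univ Finset.univ_nonempty
        (fun i => height (a i))
      rw [← hhp] at hi0
      cases hA : a i0 with
      | base p => rw [hA] at hi0; simp [height] at hi0; omega
      | fl aa jj =>
        have := (ha i0).2
        rw [hA] at this
        exact absurd this (by simp [isPt])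
      | fp b'' i'' =>
        have hv : valid S (fp b'' i'' : Pre M m n) := hA ▸ (ha i0).1
        obtain ⟨hvb, hlb, hsm'', hfin'', hcnt''⟩ := (valid_fp S b'' i'').1 hv
        have hHb : supT b'' + 1 = hp := by rw [hi0, hA, height_fp]
        have hmem : ∀ j, b j ∈ Set.range b'' := by
          intro j
          have := hinc i0 j
          rw [hA] at this
          rcases this with ⟨p₂, l₂, he, _, _⟩ | ⟨a₂, j₂, he, hmm⟩ | ⟨b₂, i₂, he, hmm⟩
          · exact absurd he (by simp)
          · exfalso
            have h1 : height (fp b'' i'' : Pre M m n) < supT a₂ + 1 :=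
              height_lt_of_mem_range hmm
            have h2 : height (b j) = supT a₂ + 1 := by rw [he, height_fl]
            have h3 : height (b j) ≤ hl := by
              rw [hhl]; exact Finset.le_sup (f := fun j => height (b j)) (Finset.mem_univ j)
            have h4 : height (fp b'' i'' : Pre M m n) = hp := by rw [hi0, hA]
            omega
          · injection he with e1 e2; subst e1; exact hmm
        have hsub : Set.range b ⊆ Set.range b'' := by rintro x ⟨j, rfl⟩; exact hmem j
        have heq : Set.range b = Set.range b'' := Set.eq_of_subset_of_ncard_le hsub
          (by rw [ncard_range_fin _ hsm''.injective, ncard_range_fin _ hbinj])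
          (Set.finite_range _)
        have hinc'' : ∀ i j, incRaw S (a i) (b'' j) := by
          intro i j
          have : b'' j ∈ Set.range b := heq ▸ Set.mem_range_self j
          obtain ⟨k, hk⟩ := this
          rw [← hk]
          exact hinc i k
        set c := (PSet S b'').ncard with hc
        have hamem : ∀ i, (¬∃ i', a i = fp b'' i') → a i ∈ (PSet S b'') := by
          intro i hnot
          have hk := keyP S b'' hsm'' (ha i).1 (ha i).2 (hinc'' i)
          rcases hk with h | h
          · exact absurd h hnot
          · exact ⟨h, (ha i).1, (ha i).2, hinc'' i⟩
        have hjlt : ∀ i', valid S (fp b'' i' : Pre M m n) → i' < m - c - 1 := by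
          intro i' hv'
          have := ((valid_fp S b'' i').1 hv').2.2.2.2
          omega
        let F : Fin m → (hfin''.toFinset) ⊕ (Fin (m - c - 1)) := fun i =>
          if h : ∃ i', a i = fp b'' i' then
            Sum.inr ⟨h.choose, hjlt _ (h.choose_spec ▸ (ha i).1)⟩
          else
            Sum.inl ⟨a i, hfin''.mem_toFinset.mpr (hamem i h)⟩
        have hFinj : Function.Injective F := by
          intro j k hjk
          by_cases h1 : ∃ i', a j = fp b'' i' <;> by_cases h2 : ∃ i', a k = fp b'' i' <;>
            simp only [F, dif_pos, dif_neg, h1, h2] at hjk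
          · apply hainj
            rw [h1.choose_spec, h2.choose_spec]
            have := Sum.inr.inj hjk
            have := Fin.mk.inj_iff.1 this
            rw [this]
          · exact absurd hjk (by simp)
          · exact absurd hjk (by simp)
          · exact hainj (Subtype.mk.inj (Sum.inl.inj hjk))
        have hcard := Fintype.card_le_of_injective F hFinj
        rw [Fintype.card_fin, Fintype.card_sum, Fintype.card_coe, Fintype.card_fin] at hcard
        have htc : hfin''.toFinset.card = c := by
          rw [hc, Set.ncard_eq_toFinset_card _ hfin'']
        omega

end Pre

namespace Pre

variable {M : Type u} {m n : ℕ} (S : IncidenceData M)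

lemma core_lines (hm : 1 ≤ m) (hn : 1 ≤ n) (hS : KFree m n S)
    (a : Fin m → Pre M m n) (hsm : StrictMono a) (hv : ∀ i, valid S (a i))
    (hp : ∀ i, isPt S (a i)) :
    ∃ b : Fin (n-1) → Pre M m n, Function.Injective b ∧ (∀ j, valid S (b j) ∧ isLn S (b j)) ∧
      (∀ i j, incRaw S (a i) (b j)) ∧
      (∀ y, valid S y → isLn S y → (∀ i, incRaw S (a i) y) → ∃ j, y = b j) := by
  classical
  have hno : ∀ f : Fin n → Pre M m n, Function.Injective f → (∀ j, f j ∈ LSet S a) → False := by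
    intro f hf hmem
    exact KFreeRaw S hm hn hS ⟨a, f, hsm.injective, hf, fun i => ⟨hv i, hp i⟩,
      fun j => ⟨(hmem j).2.1, (hmem j).2.2.1⟩, fun i j => (hmem j).2.2.2 i⟩
  obtain ⟨hfin, hcard⟩ := small_of_no_inj (LSet S a) n hno
  set c := (LSet S a).ncard with hc
  obtain ⟨g, hginj, hgrange⟩ := exists_fun_of_ncard hfin
  have hgmem : ∀ k, g k ∈ LSet S a := fun k => hgrange ▸ Set.mem_range_self k
  have hvalfl : ∀ j : ℕ, j + c + 2 ≤ n → valid S (fl a j : Pre M m n) := fun j hj =>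
    (valid_fl S a j).2 ⟨hv, hp, hsm, hfin, hj⟩
  refine ⟨fun j => if h : (j : ℕ) < c then g ⟨j, h⟩ else fl a ((j : ℕ) - c), ?_, ?_, ?_, ?_⟩
  · intro j k hjk
    dsimp only at hjk
    by_cases h1 : (j : ℕ) < c <;> by_cases h2 : (k : ℕ) < c
    · rw [dif_pos h1, dif_pos h2] at hjk
      have h3 : (j : ℕ) = (k : ℕ) := Fin.mk.inj_iff.1 (hginj hjk)
      exact Fin.ext h3
    · exfalso
      rw [dif_pos h1, dif_neg h2] at hjk
      have hh : height (g ⟨(j : ℕ), h1⟩) ≤ supT a := (hgmem _).1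
      rw [hjk, height_fl] at hh
      omega
    · exfalso
      rw [dif_neg h1, dif_pos h2] at hjk
      have hh : height (g ⟨(k : ℕ), h2⟩) ≤ supT a := (hgmem _).1
      rw [← hjk, height_fl] at hh
      omega
    · rw [dif_neg h1, dif_neg h2] at hjk
      injection hjk with e1 e2
      exact Fin.ext (by omega)
  · intro j
    dsimp only
    by_cases h1 : (j : ℕ) < c
    · rw [dif_pos h1]
      exact ⟨(hgmem _).2.1, (hgmem _).2.2.1⟩
    · rw [dif_neg h1]
      have hj2 : ((j : ℕ) - c) + c + 2 ≤ n := by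
        have := j.2
        omega
      exact ⟨hvalfl _ hj2, by simp [isLn]⟩
  · intro i j
    dsimp only
    by_cases h1 : (j : ℕ) < c
    · rw [dif_pos h1]
      exact (hgmem _).2.2.2 i
    · rw [dif_neg h1]
      exact Or.inr (Or.inl ⟨a, _, rfl, Set.mem_range_self i⟩)
  · intro y hvy hlny hincy
    dsimp only
    rcases keyL S a hsm hvy hlny hincy with ⟨j', rfl⟩ | hh
    · have hj' : j' + c + 2 ≤ n := ((valid_fl S a j').1 hvy).2.2.2.2
      refine ⟨⟨c + j', by omega⟩, ?_⟩
      rw [dif_neg (show ¬((⟨c + j', by omega⟩ : Fin (n-1)) : ℕ) < c by simp)]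
      congr 1
      simp
    · have hymem : y ∈ LSet S a := ⟨hh, hvy, hlny, hincy⟩
      rw [← hgrange] at hymem
      obtain ⟨k, hk⟩ := hymem
      refine ⟨⟨(k : ℕ), by omega⟩, ?_⟩
      rw [dif_pos (show ((⟨(k : ℕ), by omega⟩ : Fin (n-1)) : ℕ) < c from k.2)]
      have he : (⟨(k : ℕ), k.2⟩ : Fin c) = k := Fin.ext rfl
      rw [he, hk]

end Pre

namespace Pre

variable {M : Type u} {m n : ℕ} (S : IncidenceData M)

lemma core_points (hm : 1 ≤ m) (hn : 1 ≤ n) (hS : KFree m n S)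
    (b : Fin n → Pre M m n) (hsm : StrictMono b) (hv : ∀ j, valid S (b j))
    (hl : ∀ j, isLn S (b j)) :
    ∃ a : Fin (m-1) → Pre M m n, Function.Injective a ∧ (∀ i, valid S (a i) ∧ isPt S (a i)) ∧
      (∀ i j, incRaw S (a i) (b j)) ∧
      (∀ x, valid S x → isPt S x → (∀ j, incRaw S x (b j)) → ∃ i, x = a i) := by
  classical
  have hno : ∀ f : Fin m → Pre M m n, Function.Injective f → (∀ i, f i ∈ PSet S b) → False := by
    intro f hf hmem
    exact KFreeRaw S hm hn hS ⟨f, b, hf, hsm.injective,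
      fun i => ⟨(hmem i).2.1, (hmem i).2.2.1⟩, fun j => ⟨hv j, hl j⟩,
      fun i j => (hmem i).2.2.2 j⟩
  obtain ⟨hfin, hcard⟩ := small_of_no_inj (PSet S b) m hno
  set c := (PSet S b).ncard with hc
  obtain ⟨g, hginj, hgrange⟩ := exists_fun_of_ncard hfin
  have hgmem : ∀ k, g k ∈ PSet S b := fun k => hgrange ▸ Set.mem_range_self k
  have hvalfp : ∀ i : ℕ, i + c + 2 ≤ m → valid S (fp b i : Pre M m n) := fun i hi =>
    (valid_fp S b i).2 ⟨hv, hl, hsm, hfin, hi⟩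
  refine ⟨fun i => if h : (i : ℕ) < c then g ⟨i, h⟩ else fp b ((i : ℕ) - c), ?_, ?_, ?_, ?_⟩
  · intro j k hjk
    dsimp only at hjk
    by_cases h1 : (j : ℕ) < c <;> by_cases h2 : (k : ℕ) < c
    · rw [dif_pos h1, dif_pos h2] at hjk
      have h3 : (j : ℕ) = (k : ℕ) := Fin.mk.inj_iff.1 (hginj hjk)
      exact Fin.ext h3
    · exfalso
      rw [dif_pos h1, dif_neg h2] at hjk
      have hh : height (g ⟨(j : ℕ), h1⟩) ≤ supT b := (hgmem _).1
      rw [hjk, height_fp] at hh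
      omega
    · exfalso
      rw [dif_neg h1, dif_pos h2] at hjk
      have hh : height (g ⟨(k : ℕ), h2⟩) ≤ supT b := (hgmem _).1
      rw [← hjk, height_fp] at hh
      omega
    · rw [dif_neg h1, dif_neg h2] at hjk
      injection hjk with e1 e2
      exact Fin.ext (by omega)
  · intro i
    dsimp only
    by_cases h1 : (i : ℕ) < c
    · rw [dif_pos h1]
      exact ⟨(hgmem _).2.1, (hgmem _).2.2.1⟩
    · rw [dif_neg h1]
      have hi2 : ((i : ℕ) - c) + c + 2 ≤ m := by
        have := i.2
        omega
      exact ⟨hvalfp _ hi2, by simp [isPt]⟩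
  · intro i j
    dsimp only
    by_cases h1 : (i : ℕ) < c
    · rw [dif_pos h1]
      exact (hgmem _).2.2.2 j
    · rw [dif_neg h1]
      exact Or.inr (Or.inr ⟨b, _, rfl, Set.mem_range_self j⟩)
  · intro x hvx hptx hincx
    dsimp only
    rcases keyP S b hsm hvx hptx hincx with ⟨i', rfl⟩ | hh
    · have hi' : i' + c + 2 ≤ m := ((valid_fp S b i').1 hvx).2.2.2.2
      refine ⟨⟨c + i', by omega⟩, ?_⟩
      rw [dif_neg (show ¬((⟨c + i', by omega⟩ : Fin (m-1)) : ℕ) < c by simp)]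
      congr 1
      simp
    · have hxmem : x ∈ PSet S b := ⟨hh, hvx, hptx, hincx⟩
      rw [← hgrange] at hxmem
      obtain ⟨k, hk⟩ := hxmem
      refine ⟨⟨(k : ℕ), by omega⟩, ?_⟩
      rw [dif_pos (show ((⟨(k : ℕ), by omega⟩ : Fin (m-1)) : ℕ) < c from k.2)]
      have he : (⟨(k : ℕ), k.2⟩ : Fin c) = k := Fin.ext rfl
      rw [he, hk]

end Pre

/-- Membership in `T^c_{m,n}`: a `K_{m,n}`-free incidence structure in which every `m`
pairwise distinct points are simultaneously incident to exactly `n-1` pairwise distinct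
lines, and every `n` pairwise distinct lines are simultaneously incident to exactly
`m-1` pairwise distinct points. -/
def Complete (m n : ℕ) {M : Type u} (S : IncidenceData M) : Prop :=
  KFree m n S ∧
  (∀ a : Fin m → M, Function.Injective a → (∀ i, S.pt (a i)) →
    ∃ b : Fin (n - 1) → M, Function.Injective b ∧ (∀ j, S.ln (b j)) ∧
      (∀ i j, S.inc (a i) (b j)) ∧ ∀ y, S.ln y → (∀ i, S.inc (a i) y) → ∃ j, y = b j) ∧
  (∀ b : Fin n → M, Function.Injective b → (∀ j, S.ln (b j)) →
    ∃ a : Fin (m - 1) → M, Function.Injective a ∧ (∀ i, S.pt (a i)) ∧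
      (∀ i j, S.inc (a i) (b j)) ∧ ∀ x, S.pt x → (∀ j, S.inc x (b j)) → ∃ i, x = a i)

/-- An embedding of incidence structures: an injective map preserving points, lines,
incidence and non-incidence. -/
structure IncEmbedding {M : Type u} {N : Type v} (S : IncidenceData M)
    (T : IncidenceData N) where
  toFun : M → N
  inj : Function.Injective toFun
  pt_iff : ∀ x, T.pt (toFun x) ↔ S.pt x
  ln_iff : ∀ x, T.ln (toFun x) ↔ S.ln x
  inc_iff : ∀ x y, T.inc (toFun x) (toFun y) ↔ S.inc x y

/-- Every `K_{m,n}`-free incidence structure embeds, as an induced substructure, into a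
`K_{m,n}`-free incidence structure in which every `m` pairwise distinct points are
simultaneously incident to exactly `n-1` pairwise distinct lines and every `n` pairwise
distinct lines are simultaneously incident to exactly `m-1` pairwise distinct points. -/
theorem statement_0 (m n : ℕ) (hm : 1 ≤ m) (hn : 1 ≤ n)
    {M : Type u} (S : IncidenceData M) (hS : KFree m n S) :
    ∃ (N : Type u) (T : IncidenceData N),
      Complete m n T ∧ Nonempty (IncEmbedding S T) := by
  classical
  refine ⟨{z : Pre M m n // Pre.valid S z},
    { pt := fun x => Pre.isPt S x.1
      ln := fun x => Pre.isLn S x.1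
      inc := fun x y => Pre.isPt S x.1 ∧ Pre.isLn S y.1 ∧ Pre.incRaw S x.1 y.1
      pt_or_ln := ?_
      not_pt_and_ln := ?_
      inc_pt_ln := fun x y h => ⟨h.1, h.2.1⟩ }, ⟨?_, ?_, ?_⟩, ⟨?_⟩⟩
  · rintro ⟨z, hz⟩
    cases z with
    | base p => exact S.pt_or_ln p
    | fl a j => exact Or.inr trivial
    | fp b i => exact Or.inl trivial
  · rintro ⟨z, hz⟩ h
    cases z with
    | base p => exact S.not_pt_and_ln p h
    | fl a j => exact h.1
    | fp b i => exact h.2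
  · -- KFree
    rintro ⟨a, b, hainj, hbinj, ha, hb, hinc⟩
    exact Pre.KFreeRaw S hm hn hS ⟨fun i => (a i).1, fun j => (b j).1,
      fun _ _ h => hainj (Subtype.ext h), fun _ _ h => hbinj (Subtype.ext h),
      fun i => ⟨(a i).2, ha i⟩, fun j => ⟨(b j).2, hb j⟩, fun i j => (hinc i j).2.2⟩
  · -- lines through m points
    intro a hainj hapts
    obtain ⟨a', hsm', hrange⟩ := sort_tuple (fun i => (a i).1)
      (fun _ _ h => hainj (Subtype.ext h))
    have hkey : ∀ i, ∃ k, a' i = (a k).1 := by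
      intro i
      have : a' i ∈ Set.range (fun i => (a i).1) := hrange ▸ Set.mem_range_self i
      obtain ⟨k, hk⟩ := this
      exact ⟨k, hk.symm⟩
    have hkey' : ∀ k, ∃ i, (a k).1 = a' i := by
      intro k
      have : (a k).1 ∈ Set.range a' := by
        rw [hrange]; exact Set.mem_range_self k
      obtain ⟨i, hi⟩ := this
      exact ⟨i, hi.symm⟩
    have hv' : ∀ i, Pre.valid S (a' i) := by
      intro i; obtain ⟨k, hk⟩ := hkey i; rw [hk]; exact (a k).2
    have hp' : ∀ i, Pre.isPt S (a' i) := by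
      intro i; obtain ⟨k, hk⟩ := hkey i; rw [hk]; exact hapts k
    obtain ⟨b, hbinj, hbval, hbinc, hbcov⟩ := Pre.core_lines S hm hn hS a' hsm' hv' hp'
    refine ⟨fun j => ⟨b j, (hbval j).1⟩, fun _ _ h => hbinj (congrArg Subtype.val h),
      fun j => (hbval j).2, ?_, ?_⟩
    · intro i j
      refine ⟨hapts i, (hbval j).2, ?_⟩
      obtain ⟨i', hi'⟩ := hkey' i
      rw [hi']
      exact hbinc i' j
    · intro y hy hincy
      obtain ⟨j, hj⟩ := hbcov y.1 y.2 hy (fun i => by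
        obtain ⟨k, hk⟩ := hkey i
        rw [hk]
        exact (hincy k).2.2)
      exact ⟨j, Subtype.ext hj⟩
  · -- points on n lines
    intro b hbinj hblns
    obtain ⟨b', hsm', hrange⟩ := sort_tuple (fun j => (b j).1)
      (fun _ _ h => hbinj (Subtype.ext h))
    have hkey : ∀ j, ∃ k, b' j = (b k).1 := by
      intro j
      have : b' j ∈ Set.range (fun j => (b j).1) := hrange ▸ Set.mem_range_self j
      obtain ⟨k, hk⟩ := this
      exact ⟨k, hk.symm⟩
    have hkey' : ∀ k, ∃ j, (b k).1 = b' j := by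
      intro k
      have : (b k).1 ∈ Set.range b' := by
        rw [hrange]; exact Set.mem_range_self k
      obtain ⟨j, hj⟩ := this
      exact ⟨j, hj.symm⟩
    have hv' : ∀ j, Pre.valid S (b' j) := by
      intro j; obtain ⟨k, hk⟩ := hkey j; rw [hk]; exact (b k).2
    have hl' : ∀ j, Pre.isLn S (b' j) := by
      intro j; obtain ⟨k, hk⟩ := hkey j; rw [hk]; exact hblns k
    obtain ⟨a, hainj, haval, hainc, hacov⟩ := Pre.core_points S hm hn hS b' hsm' hv' hl'
    refine ⟨fun i => ⟨a i, (haval i).1⟩, fun _ _ h => hainj (congrArg Subtype.val h),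
      fun i => (haval i).2, ?_, ?_⟩
    · intro i j
      refine ⟨(haval i).2, hblns j, ?_⟩
      obtain ⟨j', hj'⟩ := hkey' j
      rw [hj']
      exact hainc i j'
    · intro x hx hincx
      obtain ⟨i, hi⟩ := hacov x.1 x.2 hx (fun j => by
        obtain ⟨k, hk⟩ := hkey j
        rw [hk]
        exact (hincx k).2.2)
      exact ⟨i, Subtype.ext hi⟩
  · -- embedding
    refine ⟨fun x => ⟨Pre.base x, Pre.valid_base S x⟩, ?_, fun x => Iff.rfl, fun x => Iff.rfl, ?_⟩
    · intro x y h
      have := congrArg Subtype.val h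
      injection this
    · intro x y
      constructor
      · rintro ⟨h1, h2, h3⟩
        rcases h3 with ⟨p, l, e1, e2, hi⟩ | ⟨aa, jj, e, _⟩ | ⟨bb, ii, e, _⟩
        · injection e1 with e1; injection e2 with e2; rw [e1, e2]; exact hi
        · exact absurd e (by simp)
        · exact absurd e (by simp)
      · intro h
        exact ⟨(S.inc_pt_ln _ _ h).1, (S.inc_pt_ln _ _ h).2, Or.inl ⟨x, y, rfl, rfl, h⟩⟩
end

section
/- Let m, n ≥ 1. If M is an existentially closed K_{m,n}-free incidence structure, then every m pairwise distinct points of M are simultaneously incident to exactly n−1 lines of M, and every n pairwise distinct lines of M are simultaneously incident to exactly m−1 points of M. -/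
open FirstOrder FirstOrder.Language

universe u v

/-- Relation symbols of the language of incidence structures: two unary symbols
(`pt` for "point", `lin` for "line") and one binary symbol (`inc` for "incidence"). -/
inductive IncRel : ℕ → Type
  | pt : IncRel 1
  | lin : IncRel 1
  | inc : IncRel 2

/-- The first-order language `{P, L, I}` of incidence structures. -/
def IncLang : FirstOrder.Language := ⟨fun _ => Empty, IncRel⟩

section
variable {M : Type u} [IncLang.Structure M]

/-- `x` is a point. -/
def ptL (x : M) : Prop := Structure.RelMap (L := IncLang) IncRel.pt ![x]

/-- `x` is a line. -/
def lnL (x : M) : Prop := Structure.RelMap (L := IncLang) IncRel.lin ![x]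

/-- `x` is incident to `y`. -/
def incL (x y : M) : Prop := Structure.RelMap (L := IncLang) IncRel.inc ![x, y]

end

/-- `M` is an incidence structure: points and lines partition the domain, and
incidence only holds between a point and a line. -/
def IsIncidenceL (M : Type u) [IncLang.Structure M] : Prop :=
  (∀ x : M, ptL x ∨ lnL x) ∧ (∀ x : M, ¬(ptL x ∧ lnL x)) ∧
    ∀ x y : M, incL x y → ptL x ∧ lnL y

/-- `M` is `K_{m,n}`-free: there are no `m` pairwise distinct points and `n` pairwise
distinct lines with every one of the points incident to every one of the lines. -/
def KFreeL (m n : ℕ) (M : Type u) [IncLang.Structure M] : Prop :=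
  ¬∃ (a : Fin m → M) (b : Fin n → M),
      Function.Injective a ∧ Function.Injective b ∧
      (∀ i, ptL (a i)) ∧ (∀ j, lnL (b j)) ∧ ∀ i j, incL (a i) (b j)

/-- `M` is an existentially closed `K_{m,n}`-free incidence structure: `M` is a
`K_{m,n}`-free incidence structure, and for every `K_{m,n}`-free incidence structure
`N` containing `M` as an induced substructure (i.e. admitting an embedding of `M`),
every existential formula `∃ ȳ φ(ā, ȳ)` (with `φ` quantifier-free and parameters `ā`
from `M`) that holds in `N` also holds in `M`. -/
def IsECL (m n : ℕ) (M : Type u) [IncLang.Structure M] : Prop :=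
  IsIncidenceL M ∧ KFreeL m n M ∧
    ∀ (N : Type u) [IncLang.Structure N], IsIncidenceL N → KFreeL m n N →
      ∀ (f : M ↪[IncLang] N) (k : ℕ) (φ : IncLang.BoundedFormula M k), φ.IsQF →
        (∃ xs : Fin k → N, φ.Realize (f : M → N) xs) →
          ∃ xs : Fin k → M, φ.Realize (id : M → M) xs

/-!
By duality (exchanging points and lines, `IncDual`) it suffices to treat `m` distinct points `a`.
By `K_{m,n}`-freeness they have `t < n` common lines. Adjoining `n - 1 - t` new lines incident
exactly to the `a i` keeps the structure a `K_{m,n}`-free incidence structure, and there `a` has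
exactly `n - 1` common lines. Existential closedness pulls `n - 1` distinct common lines back
into `M`, and by `K_{m,n}`-freeness there is no further one.
-/

theorem Set.exists_fin_enum_of_not_exists_injective {α : Type*} {S : Set α} {n : ℕ}
    (h : ¬∃ f : Fin n → α, Function.Injective f ∧ ∀ i, f i ∈ S) :
    ∃ t < n, ∃ c : Fin t → α, Function.Injective c ∧ Set.range c = S := by
  have hfin : S.Finite := by
    by_contra hS
    let e := Set.Infinite.natEmbedding S hS
    exact h ⟨fun i => e i, Subtype.val_injective.comp (e.injective.comp Fin.val_injective),
      fun i => (e i).2⟩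
  obtain ⟨t, c, hc⟩ := hfin.fin_embedding
  refine ⟨t, ?_, c, c.injective, hc⟩
  by_contra! hnt
  exact h ⟨c ∘ Fin.castLE hnt, c.injective.comp (Fin.castLE_injective hnt),
    fun i => hc ▸ Set.mem_range_self _⟩

namespace FirstOrder.Language.BoundedFormula

theorem IsQF.iInf {L : Language} {α β : Type*} {n : ℕ} [Finite β]
    {f : β → L.BoundedFormula α n} (h : ∀ b, (f b).IsQF) : (BoundedFormula.iInf f).IsQF := by
  rw [BoundedFormula.iInf]
  generalize (@Finset.univ β (Fintype.ofFinite β)).toList = l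
  induction l with
  | nil => exact IsQF.top
  | cons b l ih => exact (h b).inf ih

end FirstOrder.Language.BoundedFormula

section IncidenceEmbedding
variable {M : Type u} [IncLang.Structure M] {N : Type*} [IncLang.Structure N]

def incEmbedding (f : M → N) (hf : Function.Injective f)
    (hpt : ∀ x, ptL (f x) ↔ ptL x) (hln : ∀ x, lnL (f x) ↔ lnL x)
    (hinc : ∀ x y, incL (f x) (f y) ↔ incL x y) : M ↪[IncLang] N where
  toFun := f
  inj' := hf
  map_fun' g := nomatch g
  map_rel' := by
    intro l r v
    cases r with
    | pt => rw [← FinVec.map_eq, ← FinVec.etaExpand_eq v]; exact hpt (v 0)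
    | lin => rw [← FinVec.map_eq, ← FinVec.etaExpand_eq v]; exact hln (v 0)
    | inc => rw [← FinVec.map_eq, ← FinVec.etaExpand_eq v]; exact hinc (v 0) (v 1)

namespace FirstOrder.Language.Embedding
variable (f : M ↪[IncLang] N)

theorem ptL_iff (x : M) : ptL (f x) ↔ ptL x := by
  have h := f.map_rel IncRel.pt ![x]
  rw [← FinVec.map_eq] at h
  exact h

theorem lnL_iff (x : M) : lnL (f x) ↔ lnL x := by
  have h := f.map_rel IncRel.lin ![x]
  rw [← FinVec.map_eq] at h
  exact h

theorem incL_iff (x y : M) : incL (f x) (f y) ↔ incL x y := by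
  have h := f.map_rel IncRel.inc ![x, y]
  rw [← FinVec.map_eq] at h
  exact h

end FirstOrder.Language.Embedding

end IncidenceEmbedding

def IncDual (M : Type u) : Type u := M

section Dual
variable {M : Type u} [IncLang.Structure M]

instance : IncLang.Structure (IncDual M) where
  funMap f := nomatch f
  RelMap
    | .pt, v => lnL (M := M) (v 0)
    | .lin, v => ptL (M := M) (v 0)
    | .inc, v => incL (M := M) (v 1) (v 0)

theorem IsIncidenceL.incDual (hM : IsIncidenceL M) : IsIncidenceL (IncDual M) :=
  ⟨fun x => (hM.1 x).symm, fun x h => hM.2.1 x h.symm, fun x y h => (hM.2.2 y x h).symm⟩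

theorem KFreeL.incDual {m n : ℕ} (hM : KFreeL m n M) : KFreeL n m (IncDual M) :=
  fun ⟨b, a, hb, ha, hlb, hpa, hinc⟩ => hM ⟨a, b, ha, hb, hpa, hlb, fun i j => hinc j i⟩

def FirstOrder.Language.Embedding.incDual {N : Type*} [IncLang.Structure N]
    (f : IncDual M ↪[IncLang] N) : M ↪[IncLang] IncDual N :=
  incEmbedding (N := IncDual N) f f.injective f.lnL_iff f.ptL_iff fun x y => f.incL_iff y x

end Dual

namespace FirstOrder.Language

def BoundedFormula.incDual {α : Type*} :
    ∀ {k}, IncLang.BoundedFormula α k → IncLang.BoundedFormula α k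
  | _, .falsum => .falsum
  | _, .equal t₁ t₂ => .equal t₁ t₂
  | _, .rel .pt ts => .rel IncRel.lin ts
  | _, .rel .lin ts => .rel IncRel.pt ts
  | _, .rel .inc ts => .rel IncRel.inc ![ts 1, ts 0]
  | _, .imp φ ψ => .imp φ.incDual ψ.incDual
  | _, .all φ => .all φ.incDual

variable {T : Type u} [IncLang.Structure T] {α : Type*}

theorem Term.realize_incDual (v : α → IncDual T) (t : IncLang.Term α) :
    t.realize v = t.realize (M := T) v := by
  cases t with
  | var => rfl
  | func f => nomatch f

theorem BoundedFormula.realize_incDual_incDual {k : ℕ} (φ : IncLang.BoundedFormula α k)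
    (v : α → IncDual T) (xs : Fin k → IncDual T) :
    φ.incDual.Realize v xs ↔ φ.Realize (M := T) v xs := by
  induction φ with
  | falsum => rfl
  | equal t₁ t₂ => simp only [incDual, Realize, Term.realize_incDual]; rfl
  | rel R ts =>
    cases R <;> simp only [incDual, Realize, Term.realize_incDual] <;>
      refine Iff.of_eq
        (congrArg (Structure.RelMap (L := IncLang) (M := T) _) (funext fun i => ?_)) <;>
      fin_cases i <;> rfl
  | imp φ ψ ihφ ihψ => simp only [incDual, Realize, ihφ, ihψ]
  | all φ ih => exact forall_congr' fun x => ih _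

theorem BoundedFormula.realize_incDual {k : ℕ} (φ : IncLang.BoundedFormula α k)
    (v : α → IncDual T) (xs : Fin k → IncDual T) :
    φ.incDual.Realize (M := T) v xs ↔ φ.Realize v xs := by
  induction φ with
  | falsum => rfl
  | equal t₁ t₂ => simp only [incDual, Realize, Term.realize_incDual]; rfl
  | rel R ts =>
    cases R <;> simp only [incDual, Realize, Term.realize_incDual] <;>
      refine Iff.of_eq
        (congrArg (Structure.RelMap (L := IncLang) (M := T) _) (funext fun i => ?_)) <;>
      fin_cases i <;> rfl
  | imp φ ψ ihφ ihψ => simp only [incDual, Realize, ihφ, ihψ]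
  | all φ ih => exact forall_congr' fun x => ih _

theorem BoundedFormula.IsQF.incDual {k : ℕ} {φ : IncLang.BoundedFormula α k} (h : φ.IsQF) :
    φ.incDual.IsQF := by
  induction h with
  | falsum => exact .falsum
  | of_isAtomic h =>
    cases h with
    | equal => exact (IsAtomic.equal _ _).isQF
    | rel R ts => cases R <;> exact (IsAtomic.rel _ _).isQF
  | imp _ _ ih₁ ih₂ => exact ih₁.imp ih₂

end FirstOrder.Language

theorem IsECL.incDual {M : Type u} [IncLang.Structure M] {m n : ℕ} (hM : IsECL m n M) :
    IsECL n m (IncDual M) := by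
  refine ⟨hM.1.incDual, hM.2.1.incDual, fun N _ hN hNfree f k φ hφ ⟨xs, hxs⟩ => ?_⟩
  obtain ⟨ys, hys⟩ := hM.2.2 (IncDual N) hN.incDual hNfree.incDual f.incDual k φ.incDual
    hφ.incDual ⟨xs, (φ.realize_incDual_incDual _ _).2 hxs⟩
  exact ⟨ys, (φ.realize_incDual _ _).1 hys⟩

section CommonLines
variable {M : Type u} [IncLang.Structure M] {m n : ℕ}

def commonLines {p : ℕ} (a : Fin p → M) : Set M := {y | lnL y ∧ ∀ i, incL (a i) y}

theorem range_eq_commonLines_iff {p q : ℕ} {a : Fin p → M} {b : Fin q → M} :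
    Set.range b = commonLines a ↔ (∀ j, lnL (b j)) ∧ (∀ i j, incL (a i) (b j)) ∧
      ∀ y, lnL y → (∀ i, incL (a i) y) → ∃ j, y = b j := by
  simp only [Set.ext_iff, Set.mem_range, commonLines, Set.mem_ofPred_eq]
  constructor
  · intro h
    exact ⟨fun j => ((h _).1 ⟨j, rfl⟩).1, fun i j => ((h _).1 ⟨j, rfl⟩).2 i,
      fun y hy hya => ((h y).2 ⟨hy, hya⟩).imp fun _ => Eq.symm⟩
  · rintro ⟨hln, hinc, hall⟩ y
    exact ⟨by rintro ⟨j, rfl⟩; exact ⟨hln j, fun i => hinc i j⟩,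
      fun hy => (hall y hy.1 hy.2).imp fun _ => Eq.symm⟩

theorem commonLines_eq_of_range_eq {p p' : ℕ} {a : Fin p → M} {a' : Fin p' → M}
    (h : Set.range a = Set.range a') : commonLines a = commonLines a' := by
  ext y
  refine and_congr_right fun _ => ?_
  rw [← Set.forall_mem_range (p := (incL · y)), h, Set.forall_mem_range]

variable {a : Fin m → M}

theorem KFreeL.not_exists_injective_commonLines (hM : KFreeL m n M) (ha : Function.Injective a)
    (hpa : ∀ i, ptL (a i)) :
    ¬∃ b : Fin n → M, Function.Injective b ∧ ∀ j, b j ∈ commonLines a :=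
  fun ⟨b, hb, hbS⟩ => hM ⟨a, b, ha, hb, hpa, fun j => (hbS j).1, fun i j => (hbS j).2 i⟩

theorem KFreeL.range_eq_commonLines {q : ℕ} (hM : KFreeL m (q + 1) M) (ha : Function.Injective a)
    (hpa : ∀ i, ptL (a i)) {b : Fin q → M} (hb : Function.Injective b)
    (hbS : ∀ j, b j ∈ commonLines a) : Set.range b = commonLines a := by
  refine (Set.range_subset_iff.2 hbS).antisymm fun y hy => ?_
  by_contra hyb
  refine hM.not_exists_injective_commonLines ha hpa ⟨Fin.cons y b, ?_, ?_⟩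
  · exact Fin.cons_injective_iff.2 ⟨hyb, hb⟩
  · exact Fin.cases hy hbS

end CommonLines

section AdjoinLines
variable {M : Type u} [IncLang.Structure M]

/-- `M` with new lines indexed by `ι`, each incident exactly to the points of `A`. -/
def AdjoinLines (_A : Set M) (ι : Type v) : Type (max u v) := M ⊕ ι

variable {A : Set M} {ι : Type v}

instance : IncLang.Structure (AdjoinLines A ι) where
  funMap f := nomatch f
  RelMap
    | .pt, v => Sum.elim ptL (fun _ => False) (v 0)
    | .lin, v => Sum.elim lnL (fun _ => True) (v 0)
    | .inc, v =>
      Sum.elim (fun x => Sum.elim (incL x) (fun _ => x ∈ A) (v 1)) (fun _ => False) (v 0)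

namespace AdjoinLines

def embedding : M ↪[IncLang] AdjoinLines A ι :=
  incEmbedding Sum.inl Sum.inl_injective (fun _ => Iff.rfl) (fun _ => Iff.rfl) fun _ _ => Iff.rfl

theorem exists_eq_inl_of_ptL {z : AdjoinLines A ι} (hz : ptL z) : ∃ x, z = Sum.inl x := by
  cases z with
  | inl x => exact ⟨x, rfl⟩
  | inr e => exact hz.elim

end AdjoinLines

theorem IsIncidenceL.adjoinLines (hM : IsIncidenceL M) (hA : ∀ x ∈ A, ptL x) :
    IsIncidenceL (AdjoinLines A ι) := by
  refine ⟨?_, ?_, ?_⟩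
  · rintro (x | e)
    · exact hM.1 x
    · exact Or.inr trivial
  · rintro (x | e) h
    · exact hM.2.1 x h
    · exact h.1
  · rintro (x | e) (y | f) h
    · exact hM.2.2 x y h
    · exact ⟨hA x h, trivial⟩
    · exact h.elim
    · exact h.elim

end AdjoinLines

section AdjoinCommonLines
variable {M : Type u} [IncLang.Structure M] {m n : ℕ} {a : Fin m → M} {ι : Type v}

theorem AdjoinLines.commonLines_eq_range {t : ℕ} {c : Fin t → M}
    (hc : Set.range c = commonLines a) :
    commonLines (M := AdjoinLines (Set.range a) ι) (Sum.inl ∘ a) =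
      Set.range (Sum.elim (Sum.inl ∘ c) Sum.inr) := by
  ext (y | e)
  · rw [Set.Sum.elim_range, Set.range_comp, hc]
    refine ⟨fun h => Or.inl ⟨y, h, rfl⟩, ?_⟩
    rintro (⟨y', hy', ⟨⟩⟩ | ⟨e, ⟨⟩⟩)
    exact hy'
  · exact ⟨fun _ => ⟨Sum.inr e, rfl⟩, fun _ => ⟨trivial, fun i => ⟨i, rfl⟩⟩⟩

theorem KFreeL.adjoinLines {t k : ℕ} (hM : KFreeL m n M) (ha : Function.Injective a)
    {c : Fin t → M} (hc : Set.range c = commonLines a) (htk : t + k < n) :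
    KFreeL m n (AdjoinLines (Set.range a) (Fin k)) := by
  rintro ⟨a', b', ha', hb', hpa', hlb', hinc⟩
  choose x hx using fun i => AdjoinLines.exists_eq_inl_of_ptL (hpa' i)
  obtain rfl : a' = Sum.inl ∘ x := funext hx
  by_cases hnew : ∃ j e, b' j = Sum.inr e
  -- Then the points are exactly the `a i`, so every line is one of the `t + k < n` common lines.
  · obtain ⟨j₀, e, he⟩ := hnew
    have hxa : Set.range x = Set.range a := by
      refine Set.eq_of_subset_of_ncard_le (Set.range_subset_iff.2 fun i => ?_) ?_
      · have := hinc i j₀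
        rw [he] at this
        exact this
      · rw [Set.ncard_range_of_injective ha, Set.ncard_range_of_injective ha'.of_comp]
    have hb'S : ∀ j, b' j ∈ Set.range (Sum.elim (Sum.inl ∘ c) Sum.inr) := by
      intro j
      rw [← AdjoinLines.commonLines_eq_range hc, ← commonLines_eq_of_range_eq (M := AdjoinLines _ _)
        (a := Sum.inl ∘ x) ((Set.range_comp _ x).trans (hxa ▸ Set.range_comp _ a).symm)]
      exact ⟨hlb' j, fun i => hinc i j⟩
    choose σ hσ using hb'S
    have := Fintype.card_le_of_injective σ fun j j' h => hb' (by rw [← hσ j, ← hσ j', h])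
    simp only [Fintype.card_fin, Fintype.card_sum] at this
    omega
  · simp only [not_exists] at hnew
    have hold : ∀ j, ∃ y, b' j = Sum.inl y := by
      intro j
      cases h : b' j with
      | inl y => exact ⟨y, rfl⟩
      | inr e => exact (hnew j e h).elim
    choose y hy using hold
    obtain rfl : b' = Sum.inl ∘ y := funext hy
    exact hM ⟨x, y, ha'.of_comp, hb'.of_comp, hpa', hlb', hinc⟩

end AdjoinCommonLines

namespace FirstOrder.Language.BoundedFormula

noncomputable def commonLines {α : Type*} {p : ℕ} (a : Fin p → α) (q : ℕ) :
    IncLang.BoundedFormula α q :=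
  (iInf fun ij : {ij : Fin q × Fin q // ij.1 ≠ ij.2} =>
      ((Term.var (Sum.inr ij.1.1)).bdEqual (Term.var (Sum.inr ij.1.2))).not) ⊓
    iInf fun j : Fin q =>
      Relations.boundedFormula₁ (L := IncLang) IncRel.lin (Term.var (Sum.inr j)) ⊓
        iInf fun i : Fin p => Relations.boundedFormula₂ (L := IncLang) IncRel.inc
          (Term.var (Sum.inl (a i))) (Term.var (Sum.inr j))

theorem isQF_commonLines {α : Type*} {p : ℕ} (a : Fin p → α) (q : ℕ) :
    (commonLines a q).IsQF :=
  (IsQF.iInf fun _ => (IsAtomic.equal _ _).isQF.not).inf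
    (IsQF.iInf fun _ => (IsAtomic.rel _ _).isQF.inf (IsQF.iInf fun _ => (IsAtomic.rel _ _).isQF))

theorem realize_commonLines {α : Type*} {M : Type u} [IncLang.Structure M] {p q : ℕ}
    (a : Fin p → α) (v : α → M) (xs : Fin q → M) :
    (commonLines a q).Realize v xs ↔
      Function.Injective xs ∧ ∀ j, xs j ∈ _root_.commonLines (v ∘ a) := by
  simp only [commonLines, realize_inf, realize_iInf, realize_not, realize_bdEqual, Term.realize_var,
    Sum.elim_inr, Subtype.forall, Prod.forall, Function.injective_iff_pairwise_ne]
  exact and_congr Iff.rfl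
    (forall_congr' fun _ => and_congr realize_rel₁ (forall_congr' fun _ => realize_rel₂))

end FirstOrder.Language.BoundedFormula

section ExistentiallyClosed
variable {M : Type u} [IncLang.Structure M] {m n : ℕ}

theorem IsECL.exists_injective_commonLines (hM : IsECL m n M) {N : Type u}
    [IncLang.Structure N] (hN : IsIncidenceL N) (hNfree : KFreeL m n N) (f : M ↪[IncLang] N)
    {p q : ℕ} (a : Fin p → M) {w : Fin q → N} (hw : Function.Injective w)
    (hwa : ∀ j, w j ∈ commonLines (f ∘ a)) :
    ∃ b : Fin q → M, Function.Injective b ∧ ∀ j, b j ∈ commonLines a := by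
  obtain ⟨b, hb⟩ := hM.2.2 N hN hNfree f q _ (BoundedFormula.isQF_commonLines a q)
    ⟨w, (BoundedFormula.realize_commonLines a f w).2 ⟨hw, hwa⟩⟩
  exact ⟨b, (BoundedFormula.realize_commonLines a id b).1 hb⟩

theorem IsECL.exists_range_eq_commonLines (hM : IsECL m n M) {a : Fin m → M}
    (ha : Function.Injective a) (hpa : ∀ i, ptL (a i)) :
    ∃ b : Fin (n - 1) → M, Function.Injective b ∧ Set.range b = commonLines a := by
  obtain ⟨t, htn, c, hc, hcS⟩ :=
    Set.exists_fin_enum_of_not_exists_injective (hM.2.1.not_exists_injective_commonLines ha hpa)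
  obtain ⟨k, rfl⟩ : ∃ k, n = t + k + 1 := ⟨n - 1 - t, by omega⟩
  rw [Nat.add_sub_cancel]
  let w : Fin (t + k) → AdjoinLines (Set.range a) (Fin k) :=
    Sum.elim (Sum.inl ∘ c) Sum.inr ∘ finSumFinEquiv.symm
  have hw : Function.Injective w :=
    ((Sum.inl_injective.comp hc).sumElim Sum.inr_injective fun _ _ => Sum.inl_ne_inr).comp
      finSumFinEquiv.symm.injective
  have hwS : ∀ j, w j ∈ commonLines (AdjoinLines.embedding ∘ a) := fun _ =>
    (AdjoinLines.commonLines_eq_range hcS).symm.subset (Set.mem_range_self _)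
  obtain ⟨b, hb, hbS⟩ := hM.exists_injective_commonLines
    (hM.1.adjoinLines (Set.forall_mem_range.2 hpa)) (hM.2.1.adjoinLines ha hcS (by omega))
    AdjoinLines.embedding a hw hwS
  exact ⟨b, hb, hM.2.1.range_eq_commonLines ha hpa hb hbS⟩

end ExistentiallyClosed

theorem statement_1_general (m n : ℕ)
    (M : Type u) [IncLang.Structure M] (hM : IsECL m n M) :
    (∀ a : Fin m → M, Function.Injective a → (∀ i, ptL (a i)) →
      ∃ b : Fin (n - 1) → M, Function.Injective b ∧ (∀ j, lnL (b j)) ∧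
        (∀ i j, incL (a i) (b j)) ∧
        ∀ y : M, lnL y → (∀ i, incL (a i) y) → ∃ j, y = b j) ∧
    (∀ b : Fin n → M, Function.Injective b → (∀ j, lnL (b j)) →
      ∃ a : Fin (m - 1) → M, Function.Injective a ∧ (∀ i, ptL (a i)) ∧
        (∀ i j, incL (a i) (b j)) ∧
        ∀ x : M, ptL x → (∀ j, incL x (b j)) → ∃ i, x = a i) := by
  refine ⟨fun a ha hpa => ?_, fun b hb hlb => ?_⟩
  · obtain ⟨b, hb, hbS⟩ := hM.exists_range_eq_commonLines ha hpa
    exact ⟨b, hb, range_eq_commonLines_iff.1 hbS⟩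
  · obtain ⟨a, ha, haS⟩ := hM.incDual.exists_range_eq_commonLines (M := IncDual M) hb hlb
    obtain ⟨hpa, hinc, hall⟩ := range_eq_commonLines_iff.1 haS
    exact ⟨a, ha, hpa, fun i j => hinc j i, hall⟩

/-- If `M` is an existentially closed `K_{m,n}`-free incidence structure, then every
`m` pairwise distinct points of `M` are simultaneously incident to exactly `n-1` lines
of `M`, and every `n` pairwise distinct lines of `M` are simultaneously incident to
exactly `m-1` points of `M`. -/
theorem statement_1 (m n : ℕ) (hm : 1 ≤ m) (hn : 1 ≤ n)
    (M : Type u) [IncLang.Structure M] (hM : IsECL m n M) :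
    (∀ a : Fin m → M, Function.Injective a → (∀ i, ptL (a i)) →
      ∃ b : Fin (n - 1) → M, Function.Injective b ∧ (∀ j, lnL (b j)) ∧
        (∀ i j, incL (a i) (b j)) ∧
        ∀ y : M, lnL y → (∀ i, incL (a i) y) → ∃ j, y = b j) ∧
    (∀ b : Fin n → M, Function.Injective b → (∀ j, lnL (b j)) →
      ∃ a : Fin (m - 1) → M, Function.Injective a ∧ (∀ i, ptL (a i)) ∧
        (∀ i j, incL (a i) (b j)) ∧
        ∀ x : M, ptL x → (∀ j, incL x (b j)) → ∃ i, x = a i) :=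
  statement_1_general m n M hM
end

section
/- Let m, n ≥ 1. Let B and C be K_{m,n}-free incidence structures whose intersection A = B ∩ C is an induced substructure of both, and suppose A is a member of T^c_{m,n}. Let D be the incidence structure on the union B ∪ C whose points, lines and incidences are exactly those of B together with those of C (so there are no incidences between B∖A and C∖A). Then D is K_{m,n}-free. -/
universe u v

/-- The induced incidence structure on a subset. -/
def IncidenceData.restrict {M : Type u} (S : IncidenceData M) (A : Set M) :
    IncidenceData A where
  pt x := S.pt x
  ln x := S.ln x
  inc x y := S.inc x y
  pt_or_ln x := S.pt_or_ln x
  not_pt_and_ln x := S.not_pt_and_ln x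
  inc_pt_ln x y h := S.inc_pt_ln x y h

/-- Helper: if a full `K_{m,n}` lies inside a subset `X`, then `S.restrict X` is not
`K_{m,n}`-free. -/
lemma not_kfree_of_sub {U : Type u} (S : IncidenceData U) (X : Set U) (m n : ℕ)
    (a : Fin m → U) (b : Fin n → U)
    (ha : Function.Injective a) (hb : Function.Injective b)
    (hpt : ∀ i, S.pt (a i)) (hln : ∀ j, S.ln (b j))
    (hi : ∀ i j, S.inc (a i) (b j))
    (haX : ∀ i, a i ∈ X) (hbX : ∀ j, b j ∈ X) :
    ¬ KFree m n (S.restrict X) := by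
  intro h
  exact h ⟨fun i => ⟨a i, haX i⟩, fun j => ⟨b j, hbX j⟩,
    fun i₁ i₂ hh => ha (congrArg Subtype.val hh),
    fun j₁ j₂ hh => hb (congrArg Subtype.val hh),
    fun i => hpt i, fun j => hln j, fun i j => hi i j⟩

/-- Free amalgam of two `K_{m,n}`-free incidence structures `B`, `C` over their common
intersection `A = B ∩ C`, when `A` is in `T^c_{m,n}`, is `K_{m,n}`-free.  Here the
ambient structure `S` on `U = B ∪ C` has exactly the incidences of `B` together with
those of `C` (in particular none between `B∖A` and `C∖A`). -/
theorem statement_5 (m n : ℕ) (hm : 1 ≤ m) (hn : 1 ≤ n)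
    {U : Type u} (S : IncidenceData U) (B C : Set U)
    (hUnion : B ∪ C = Set.univ)
    (hB : KFree m n (S.restrict B))
    (hC : KFree m n (S.restrict C))
    (hA : Complete m n (S.restrict (B ∩ C)))
    (hinc : ∀ x y, S.inc x y → (x ∈ B ∧ y ∈ B) ∨ (x ∈ C ∧ y ∈ C)) :
    KFree m n S := by
  rintro ⟨a, b, ha, hb, hpt, hln, hi⟩
  have hmemB : ∀ z : U, z ∉ C → z ∈ B := by
    intro z hz
    have hz2 : z ∈ B ∪ C := hUnion ▸ Set.mem_univ z
    rcases hz2 with h | h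
    · exact h
    · exact absurd h hz
  have hmemC : ∀ z : U, z ∉ B → z ∈ C := by
    intro z hz
    have hz2 : z ∈ B ∪ C := hUnion ▸ Set.mem_univ z
    rcases hz2 with h | h
    · exact absurd h hz
    · exact h
  have h1 : (∃ i, a i ∉ B) ∨ (∃ j, b j ∉ B) := by
    by_contra h
    push_neg at h
    exact not_kfree_of_sub S B m n a b ha hb hpt hln hi h.1 h.2 hB
  have h2 : (∃ i, a i ∉ C) ∨ (∃ j, b j ∉ C) := by
    by_contra h
    push_neg at h
    exact not_kfree_of_sub S C m n a b ha hb hpt hln hi h.1 h.2 hC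
  rcases h1 with ⟨i₁, hi₁⟩ | ⟨j₁, hj₁⟩ <;> rcases h2 with ⟨i₀, hi₀⟩ | ⟨j₀, hj₀⟩
  · -- a point not in B and a point not in C: all lines lie in A = B ∩ C
    have hbA : ∀ j, b j ∈ B ∩ C := by
      intro j
      constructor
      · rcases hinc _ _ (hi i₀ j) with h | h
        · exact h.2
        · exact absurd h.1 hi₀
      · rcases hinc _ _ (hi i₁ j) with h | h
        · exact absurd h.1 hi₁
        · exact h.2
    obtain ⟨x, hxinj, hxpt, hxinc, -⟩ := hA.2.2 (fun j => ⟨b j, hbA j⟩)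
      (fun j₁' j₂' hh => hb (congrArg Subtype.val hh)) (fun j => hln j)
    -- build m distinct points in B: the m-1 points of A together with a i₀
    set a' : Fin m → U := fun i => if h : (i : ℕ) < m - 1 then (x ⟨i, h⟩ : U) else a i₀
      with ha'def
    have ha'mem : ∀ i, a' i ∈ B := by
      intro i
      by_cases h : (i : ℕ) < m - 1 <;> simp only [ha'def, h, dite_true, dite_false]
      · exact (x ⟨i, h⟩).2.1
      · exact hmemB _ hi₀
    refine not_kfree_of_sub S B m n a' b ?_ hb ?_ hln ?_ ha'mem (fun j => (hbA j).1) hB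
    · intro p q hpq
      by_cases hp : (p : ℕ) < m - 1 <;> by_cases hq : (q : ℕ) < m - 1 <;>
        simp only [ha'def, hp, hq, dite_true, dite_false] at hpq
      · have h3 : (⟨(p : ℕ), hp⟩ : Fin (m - 1)) = ⟨(q : ℕ), hq⟩ := hxinj (Subtype.ext hpq)
        simp only [Fin.mk.injEq] at h3
        exact Fin.ext h3
      · exact absurd (hpq ▸ (x ⟨p, hp⟩).2.2) hi₀
      · exact absurd (hpq ▸ (x ⟨q, hq⟩).2.2) hi₀
      · have := p.isLt; have := q.isLt
        exact Fin.ext (by omega)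
    · intro i
      by_cases h : (i : ℕ) < m - 1 <;> simp only [ha'def, h, dite_true, dite_false]
      · exact hxpt ⟨i, h⟩
      · exact hpt i₀
    · intro i j
      by_cases h : (i : ℕ) < m - 1 <;> simp only [ha'def, h, dite_true, dite_false]
      · exact hxinc ⟨i, h⟩ j
      · exact hi i₀ j
  · -- a point not in B and a line not in C: direct contradiction
    rcases hinc _ _ (hi i₁ j₀) with h | h
    · exact hi₁ h.1
    · exact hj₀ h.2
  · -- a line not in B and a point not in C: direct contradiction
    rcases hinc _ _ (hi i₀ j₁) with h | h
    · exact hj₁ h.2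
    · exact hi₀ h.1
  · -- a line not in B and a line not in C: all points lie in A = B ∩ C
    have haA : ∀ i, a i ∈ B ∩ C := by
      intro i
      constructor
      · rcases hinc _ _ (hi i j₀) with h | h
        · exact h.1
        · exact absurd h.2 hj₀
      · rcases hinc _ _ (hi i j₁) with h | h
        · exact absurd h.2 hj₁
        · exact h.1
    obtain ⟨y, hyinj, hyln, hyinc, -⟩ := hA.2.1 (fun i => ⟨a i, haA i⟩)
      (fun i₁' i₂' hh => ha (congrArg Subtype.val hh)) (fun i => hpt i)
    set b' : Fin n → U := fun j => if h : (j : ℕ) < n - 1 then (y ⟨j, h⟩ : U) else b j₀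
      with hb'def
    have hb'mem : ∀ j, b' j ∈ B := by
      intro j
      by_cases h : (j : ℕ) < n - 1 <;> simp only [hb'def, h, dite_true, dite_false]
      · exact (y ⟨j, h⟩).2.1
      · exact hmemB _ hj₀
    refine not_kfree_of_sub S B m n a b' ha ?_ hpt ?_ ?_ (fun i => (haA i).1) hb'mem hB
    · intro p q hpq
      by_cases hp : (p : ℕ) < n - 1 <;> by_cases hq : (q : ℕ) < n - 1 <;>
        simp only [hb'def, hp, hq, dite_true, dite_false] at hpq
      · have h3 : (⟨(p : ℕ), hp⟩ : Fin (n - 1)) = ⟨(q : ℕ), hq⟩ := hyinj (Subtype.ext hpq)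
        simp only [Fin.mk.injEq] at h3
        exact Fin.ext h3
      · exact absurd (hpq ▸ (y ⟨p, hp⟩).2.2) hj₀
      · exact absurd (hpq ▸ (y ⟨q, hq⟩).2.2) hj₀
      · have := p.isLt; have := q.isLt
        exact Fin.ext (by omega)
    · intro j
      by_cases h : (j : ℕ) < n - 1 <;> simp only [hb'def, h, dite_true, dite_false]
      · exact hyln ⟨j, h⟩
      · exact hln j₀
    · intro i j
      by_cases h : (j : ℕ) < n - 1 <;> simp only [hb'def, h, dite_true, dite_false]
      · exact hyinc i ⟨j, h⟩
      · exact hi i j₀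
end

section
/- Let m, n ≥ 1. The class T^c_{m,n} has the disjoint amalgamation property: for all A, B, C in T^c_{m,n} and embeddings f : A → B and g : A → C, there exist D in T^c_{m,n} and embeddings f' : B → D and g' : C → D such that f' ∘ f = g' ∘ g and f'(B) ∩ g'(C) = f'(f(A)). -/
universe u v

/-!
Glue `B` and `C` freely along `A`: the amalgam carries the incidences of `B` and of `C` and no
others. It is `K_{m,n}`-free: a `K_{m,n}` lying neither in `B` nor in `C` has two points (or two
lines) on different sides of `A`, which forces all its lines (points) into `A`; but `A` is closed
in `C`, since the `n - 1` common lines of `m` points of `A` (the `m - 1` common points of `n` lines)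
are already all in `A`.

Then complete the amalgam in countably many stages, each freely adjoining the missing common
lines of every `m` points and the missing common points of every `n` lines. Free adjunction
keeps every stage `K_{m,n}`-free, so the counts reached at one stage never grow later, and the
union lies in `T^c_{m,n}`.
-/

open Function Set

lemma Set.exists_injective_fin_of_encard_eq {X : Type*} {P : Set X} {k : ℕ}
    (h : P.encard = k) : ∃ e : Fin k → X, Injective e ∧ range e = P := by
  have := (finite_of_encard_eq_coe h).fintype
  have hcard : Fintype.card P = k := by
    rw [← ENat.natCast_inj, ← h, encard_eq_coe_toFinset_card, toFinset_card]
  let eqv := Fintype.equivFinOfCardEq hcard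
  refine ⟨Subtype.val ∘ eqv.symm, Subtype.val_injective.comp eqv.symm.injective, ?_⟩
  rw [range_comp, eqv.symm.range_eq_univ, image_univ, Subtype.range_coe]

lemma Set.encard_range_of_injective_fin {X : Type*} {k : ℕ} {e : Fin k → X}
    (he : Injective e) : (range e).encard = k := by
  rw [← image_univ, he.encard_image, encard_univ, ENat.card_eq_coe_fintype_card,
    Fintype.card_fin]

noncomputable def Set.enumOfEncardEq {X : Type*} {P : Set X} {k : ℕ} (h : P.encard = k) :
    Fin k → X :=
  (exists_injective_fin_of_encard_eq h).choose

lemma Set.range_enumOfEncardEq {X : Type*} {P : Set X} {k : ℕ} (h : P.encard = k) :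
    range (enumOfEncardEq h) = P :=
  (exists_injective_fin_of_encard_eq h).choose_spec.2

lemma ENat.le_coe_sub_one_of_lt {a : ℕ∞} {n : ℕ} (h : a < n) : a ≤ (n - 1 : ℕ) := by
  cases n with
  | zero => exact absurd h (by simp)
  | succ n => exact Order.le_of_lt_add_one (by exact_mod_cast h)

lemma Set.encard_add_encard_lt_sub_ncard {X : Type*} {c : Set X} {n : ℕ} (hc : c.encard < n) :
    c.encard + {j | j < n - 1 - c.ncard}.encard = (n - 1 : ℕ) := by
  have hfin : c.Finite := encard_lt_top_iff.1 (hc.trans_le le_top)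
  rw [Set.Nat.encard_range, ← hfin.cast_ncard_eq] at *
  norm_cast at hc ⊢
  omega

namespace IncidenceData

variable {X : Type*} (S : IncidenceData X)

def dual : IncidenceData X where
  pt := S.ln
  ln := S.pt
  inc x y := S.inc y x
  pt_or_ln z := (S.pt_or_ln z).symm
  not_pt_and_ln z h := S.not_pt_and_ln z h.symm
  inc_pt_ln x y h := (S.inc_pt_ln y x h).symm

def restrict_s6 (U : Set X) : IncidenceData U where
  pt x := S.pt x
  ln x := S.ln x
  inc x y := S.inc x y
  pt_or_ln x := S.pt_or_ln x
  not_pt_and_ln x := S.not_pt_and_ln x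
  inc_pt_ln x y := S.inc_pt_ln x y

def commonLines (s P : Set X) : Set X := {y | y ∈ s ∧ S.ln y ∧ ∀ x ∈ P, S.inc x y}

def commonPoints (s L : Set X) : Set X := {x | x ∈ s ∧ S.pt x ∧ ∀ y ∈ L, S.inc x y}

lemma commonLines_mono {s s' : Set X} (h : s ⊆ s') (P : Set X) :
    S.commonLines s P ⊆ S.commonLines s' P :=
  fun _ hy => ⟨h hy.1, hy.2⟩

def KFreeOn (m n : ℕ) (s : Set X) : Prop :=
  ∀ P ⊆ s, P.encard = m → (∀ x ∈ P, S.pt x) → (S.commonLines s P).encard < n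

variable {S} {m n : ℕ} {s : Set X}

lemma KFreeOn.not_forall_inc (h : S.KFreeOn m n s) {p : Fin m → X} {l : Fin n → X}
    (hp : Injective p) (hl : Injective l) (hps : ∀ i, p i ∈ s) (hls : ∀ j, l j ∈ s)
    (hpt : ∀ i, S.pt (p i)) (hln : ∀ j, S.ln (l j)) : ¬ ∀ i j, S.inc (p i) (l j) := by
  intro hinc
  have hsub : range l ⊆ S.commonLines s (range p) := by
    rintro _ ⟨j, rfl⟩
    exact ⟨hls j, hln j, by rintro _ ⟨i, rfl⟩; exact hinc i j⟩
  have := (h (range p) (range_subset_iff.2 hps) (encard_range_of_injective_fin hp)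
    (by rintro _ ⟨i, rfl⟩; exact hpt i)).trans_le' (encard_mono hsub)
  rw [encard_range_of_injective_fin hl] at this
  exact lt_irrefl _ this

lemma KFreeOn.dual (h : S.KFreeOn m n s) : S.dual.KFreeOn n m s := by
  intro L hLs hLn hLln
  by_contra! hle
  obtain ⟨P, hP, hPm⟩ := exists_subset_encard_eq hle
  have hsub : L ⊆ S.commonLines s P :=
    fun y hy => ⟨hLs hy, hLln y hy, fun x hx => (hP hx).2.2 y hy⟩
  have := (h P (hP.trans fun _ hx => hx.1) hPm fun x hx => (hP hx).2.1).trans_le' (encard_mono hsub)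
  rw [hLn] at this
  exact lt_irrefl _ this

lemma KFreeOn.kFree_restrict (h : S.KFreeOn m n s) : KFree m n (S.restrict_s6 s) :=
  fun ⟨p, l, hp, hl, hpt, hln, hinc⟩ =>
    h.not_forall_inc (Subtype.val_injective.comp hp) (Subtype.val_injective.comp hl)
      (fun i => (p i).2) (fun j => (l j).2) hpt hln hinc

variable (S) in
/-- `s'` arises from `s` by freely adjoining lines and points. -/
structure IsFreeStep (m n : ℕ) (s s' : Set X) : Prop where
  subset : s ⊆ s'
  not_inc : ∀ x ∈ s' \ s, ∀ y ∈ s' \ s, ¬ S.inc x y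
  encard_commonPoints : ∀ y ∈ s' \ s, S.ln y → (S.commonPoints s {y}).encard = m
  encard_commonLines : ∀ x ∈ s' \ s, S.pt x → (S.commonLines s {x}).encard = n
  encard_newLines : ∀ P ⊆ s, P.encard = m → (∀ x ∈ P, S.pt x) →
    (S.commonLines s P).encard + {y | y ∈ s' \ s ∧ S.ln y ∧ S.commonPoints s {y} = P}.encard
      = (n - 1 : ℕ)
  encard_newPoints : ∀ L ⊆ s, L.encard = n → (∀ y ∈ L, S.ln y) →
    (S.commonPoints s L).encard + {x | x ∈ s' \ s ∧ S.pt x ∧ S.commonLines s {x} = L}.encard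
      = (m - 1 : ℕ)

variable {s' : Set X}

lemma IsFreeStep.dual (h : S.IsFreeStep m n s s') : S.dual.IsFreeStep n m s s' where
  subset := h.subset
  not_inc x hx y hy := h.not_inc y hy x hx
  encard_commonPoints := h.encard_commonLines
  encard_commonLines := h.encard_commonPoints
  encard_newLines := h.encard_newPoints
  encard_newPoints := h.encard_newLines

lemma IsFreeStep.commonLines_eq (h : S.IsFreeStep m n s s') {P : Set X} (hPs : P ⊆ s)
    (hPm : P.encard = m) (hPpt : ∀ x ∈ P, S.pt x) :
    S.commonLines s' P =
      S.commonLines s P ∪ {y | y ∈ s' \ s ∧ S.ln y ∧ S.commonPoints s {y} = P} := by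
  ext y
  constructor
  · rintro ⟨hy', hyln, hyinc⟩
    by_cases hys : y ∈ s
    · exact Or.inl ⟨hys, hyln, hyinc⟩
    refine Or.inr ⟨⟨hy', hys⟩, hyln, ((finite_of_encard_eq_coe hPm).eq_of_subset_of_encard_le
      (t := S.commonPoints s {y}) (fun x hx => ⟨hPs hx, hPpt x hx, by simpa using hyinc x hx⟩)
      ?_).symm⟩
    rw [hPm, h.encard_commonPoints y ⟨hy', hys⟩ hyln]
  · rintro (⟨hys, hyln, hyinc⟩ | ⟨⟨hy', -⟩, hyln, hyP⟩)
    · exact ⟨h.subset hys, hyln, hyinc⟩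
    · refine ⟨hy', hyln, fun x hx => ?_⟩
      rw [← hyP] at hx
      simpa using hx.2.2

lemma IsFreeStep.encard_commonLines_eq (h : S.IsFreeStep m n s s') {P : Set X} (hPs : P ⊆ s)
    (hPm : P.encard = m) (hPpt : ∀ x ∈ P, S.pt x) :
    (S.commonLines s' P).encard = (n - 1 : ℕ) := by
  rw [h.commonLines_eq hPs hPm hPpt, encard_union_eq, h.encard_newLines P hPs hPm hPpt]
  exact disjoint_left.2 fun y hy hy' => hy'.1.2 hy.1

lemma IsFreeStep.encard_commonPoints_eq (h : S.IsFreeStep m n s s') {L : Set X} (hLs : L ⊆ s)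
    (hLn : L.encard = n) (hLln : ∀ y ∈ L, S.ln y) :
    (S.commonPoints s' L).encard = (m - 1 : ℕ) :=
  h.dual.encard_commonLines_eq hLs hLn hLln

lemma IsFreeStep.kFreeOn (h : S.IsFreeStep m n s s') (hs : S.KFreeOn m n s) :
    S.KFreeOn m n s' := by
  intro P hPs' hPm hPpt
  by_cases hPs : P ⊆ s
  · have hlt := hs P hPs hPm hPpt
    rw [h.encard_commonLines_eq hPs hPm hPpt]
    have hn : n ≠ 0 := by rintro rfl; exact not_lt_zero hlt
    exact_mod_cast Nat.sub_lt (Nat.pos_of_ne_zero hn) one_pos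
  obtain ⟨x, hxP, hxs⟩ := not_subset.1 hPs
  have hx : x ∈ s' \ s := ⟨hPs' hxP, hxs⟩
  set L := S.commonLines s {x}
  have hLn : L.encard = n := h.encard_commonLines x hx (hPpt x hxP)
  have hsub : S.commonLines s' P ⊆ L := by
    rintro y ⟨hy', hyln, hyinc⟩
    have hys : y ∈ s := by_contra fun hys => h.not_inc x hx y ⟨hy', hys⟩ (hyinc x hxP)
    exact ⟨hys, hyln, by simpa using hyinc x hxP⟩
  rw [← hLn]
  refine (finite_of_encard_eq_coe hLn).subset hsub |>.encard_lt_encard ⟨hsub, fun hLsub => ?_⟩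
  -- `P` would be `m` points on the `n` lines of `L`, which only have `m - 1` common points
  have hPL : P ⊆ S.commonPoints s' L :=
    fun z hz => ⟨hPs' hz, hPpt z hz, fun y hy => (hLsub hy).2.2 z hz⟩
  have hle := encard_mono hPL
  rw [hPm, h.encard_commonPoints_eq (fun _ hy => hy.1) hLn fun _ hy => hy.2.1] at hle
  have hm : m ≤ m - 1 := by exact_mod_cast hle
  have : m ≠ 0 := by
    rintro rfl
    exact (encard_eq_zero.1 hPm ▸ hxP : x ∈ (∅ : Set X))
  omega

section Chain

variable {s : ℕ → Set X}

lemma kFreeOn_of_isFreeStep (hstep : ∀ k, S.IsFreeStep m n (s k) (s (k + 1)))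
    (h0 : S.KFreeOn m n (s 0)) (k : ℕ) : S.KFreeOn m n (s k) := by
  induction k with
  | zero => exact h0
  | succ k ih => exact (hstep k).kFreeOn ih

/-- The `n - 1` common lines found at stage `k + 1` are all of them, by `K_{m,n}`-freeness of the
later stages. -/
lemma commonLines_iUnion_eq (hstep : ∀ k, S.IsFreeStep m n (s k) (s (k + 1)))
    (h0 : S.KFreeOn m n (s 0)) {k : ℕ} {P : Set X} (hPs : P ⊆ s k) (hPm : P.encard = m)
    (hPpt : ∀ x ∈ P, S.pt x) :
    S.commonLines (⋃ t, s t) P = S.commonLines (s (k + 1)) P := by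
  refine Subset.antisymm (fun y hy => ?_) (S.commonLines_mono (subset_iUnion s _) P)
  obtain ⟨t, hyt⟩ := mem_iUnion.1 hy.1
  have hmono : Monotone s := monotone_nat_of_le_succ fun k => (hstep k).subset
  have hcount := (hstep k).encard_commonLines_eq hPs hPm hPpt
  have heq := (finite_of_encard_eq_coe hcount).eq_of_subset_of_encard_le
    (S.commonLines_mono (hmono (le_max_right t (k + 1))) P) ?_
  · rw [heq]
    exact ⟨hmono (le_max_left _ _) hyt, hy.2⟩
  rw [hcount]
  exact ENat.le_coe_sub_one_of_lt <| kFreeOn_of_isFreeStep hstep h0 (max t (k + 1)) P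
    (hPs.trans (hmono (by omega))) hPm hPpt

lemma exists_subset_of_isFreeStep (hstep : ∀ k, S.IsFreeStep m n (s k) (s (k + 1)))
    {P : Set X} (hP : P ⊆ ⋃ k, s k) (hPm : P.encard = m) : ∃ k, P ⊆ s k := by
  obtain ⟨k, hk⟩ := (monotone_nat_of_le_succ fun k => (hstep k).subset).directed_le
    |>.exists_mem_subset_of_finset_subset_biUnion
      (s := (finite_of_encard_eq_coe hPm).toFinset) (by simpa using hP)
  exact ⟨k, by simpa using hk⟩

lemma encard_commonLines_iUnion (hstep : ∀ k, S.IsFreeStep m n (s k) (s (k + 1)))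
    (h0 : S.KFreeOn m n (s 0)) {P : Set X} (hP : P ⊆ ⋃ k, s k) (hPm : P.encard = m)
    (hPpt : ∀ x ∈ P, S.pt x) : (S.commonLines (⋃ k, s k) P).encard = (n - 1 : ℕ) := by
  obtain ⟨k, hk⟩ := exists_subset_of_isFreeStep hstep hP hPm
  rw [commonLines_iUnion_eq hstep h0 hk hPm hPpt, (hstep k).encard_commonLines_eq hk hPm hPpt]

lemma kFreeOn_iUnion (hstep : ∀ k, S.IsFreeStep m n (s k) (s (k + 1)))
    (h0 : S.KFreeOn m n (s 0)) : S.KFreeOn m n (⋃ k, s k) := by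
  intro P hP hPm hPpt
  obtain ⟨k, hk⟩ := exists_subset_of_isFreeStep hstep hP hPm
  rw [commonLines_iUnion_eq hstep h0 hk hPm hPpt]
  exact kFreeOn_of_isFreeStep hstep h0 (k + 1) P (hk.trans (hstep k).subset) hPm hPpt

end Chain

lemma exists_commonLines_restrict {U : Set X}
    (hL : ∀ P ⊆ U, P.encard = m → (∀ x ∈ P, S.pt x) →
      (S.commonLines U P).encard = (n - 1 : ℕ))
    (a : Fin m → U) (ha : Injective a) (hpt : ∀ i, S.pt (a i)) :
    ∃ b : Fin (n - 1) → U, Injective b ∧ (∀ j, S.ln (b j)) ∧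
      (∀ i j, S.inc (a i) (b j)) ∧
      ∀ y : U, S.ln y → (∀ i, S.inc (a i) y) → ∃ j, y = b j := by
  set P := range (Subtype.val ∘ a)
  obtain ⟨e, he, hrange⟩ := exists_injective_fin_of_encard_eq <|
    hL P (range_subset_iff.2 fun i => (a i).2)
      (encard_range_of_injective_fin (Subtype.val_injective.comp ha))
      (by rintro _ ⟨i, rfl⟩; exact hpt i)
  have hmem : ∀ j, e j ∈ S.commonLines U P := fun j => hrange ▸ mem_range_self j
  refine ⟨fun j => ⟨e j, (hmem j).1⟩, fun j j' h => he (congrArg Subtype.val h),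
    fun j => (hmem j).2.1, fun i j => (hmem j).2.2 _ ⟨i, rfl⟩, fun y hyln hyinc => ?_⟩
  obtain ⟨j, hj⟩ : y.1 ∈ range e :=
    hrange ▸ ⟨y.2, hyln, by rintro _ ⟨i, rfl⟩; exact hyinc i⟩
  exact ⟨j, Subtype.ext hj.symm⟩

lemma complete_restrict {U : Set X} (hK : S.KFreeOn m n U)
    (hL : ∀ P ⊆ U, P.encard = m → (∀ x ∈ P, S.pt x) →
      (S.commonLines U P).encard = (n - 1 : ℕ))
    (hP : ∀ L ⊆ U, L.encard = n → (∀ y ∈ L, S.ln y) →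
      (S.commonPoints U L).encard = (m - 1 : ℕ)) :
    Complete m n (S.restrict_s6 U) := by
  refine ⟨hK.kFree_restrict, exists_commonLines_restrict hL, fun b hb hln => ?_⟩
  obtain ⟨a, ha, hapt, hinc, hall⟩ := exists_commonLines_restrict (S := S.dual) hP b hb hln
  exact ⟨a, ha, hapt, fun i j => hinc j i, hall⟩

theorem complete_restrict_iUnion {s : ℕ → Set X}
    (hstep : ∀ k, S.IsFreeStep m n (s k) (s (k + 1))) (h0 : S.KFreeOn m n (s 0)) :
    Complete m n (S.restrict_s6 (⋃ k, s k)) :=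
  complete_restrict (kFreeOn_iUnion hstep h0) (fun _ => encard_commonLines_iUnion hstep h0)
    fun _ => encard_commonLines_iUnion (fun k => (hstep k).dual) h0.dual

end IncidenceData

lemma Complete.dual {m n : ℕ} {M : Type*} {S : IncidenceData M} (h : Complete m n S) :
    Complete n m S.dual := by
  obtain ⟨hK, hL, hP⟩ := h
  refine ⟨fun ⟨a, b, ha, hb, hpa, hlb, hinc⟩ =>
      hK ⟨b, a, hb, ha, hlb, hpa, fun i j => hinc j i⟩,
    fun a ha hpa => ?_, fun b hb hlb => ?_⟩
  · obtain ⟨b, hb, hlb, hinc, hall⟩ := hP a ha hpa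
    exact ⟨b, hb, hlb, fun i j => hinc j i, hall⟩
  · obtain ⟨a, ha, hpa, hinc, hall⟩ := hL b hb hlb
    exact ⟨a, ha, hpa, fun i j => hinc j i, hall⟩

namespace IncEmbedding

variable {m n : ℕ} {M N : Type*} {S : IncidenceData M} {T : IncidenceData N}

def comp {P : Type*} {W : IncidenceData P} (e : IncEmbedding S T) (e' : IncEmbedding T W) :
    IncEmbedding S W where
  toFun := e'.toFun ∘ e.toFun
  inj := e'.inj.comp e.inj
  pt_iff x := (e'.pt_iff _).trans (e.pt_iff x)
  ln_iff x := (e'.ln_iff _).trans (e.ln_iff x)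
  inc_iff x y := (e'.inc_iff _ _).trans (e.inc_iff x y)

lemma inc_congr {P : Type*} {W : IncidenceData P} (e : IncEmbedding S T)
    (e' : IncEmbedding S W) (x y : M) :
    T.inc (e.toFun x) (e.toFun y) ↔ W.inc (e'.toFun x) (e'.toFun y) :=
  (e.inc_iff x y).trans (e'.inc_iff x y).symm

def dual (e : IncEmbedding S T) : IncEmbedding S.dual T.dual where
  toFun := e.toFun
  inj := e.inj
  pt_iff := e.ln_iff
  ln_iff := e.pt_iff
  inc_iff x y := e.inc_iff y x

def codRestrict (e : IncEmbedding S T) (U : Set N) (h : ∀ x, e.toFun x ∈ U) :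
    IncEmbedding S (T.restrict_s6 U) where
  toFun x := ⟨e.toFun x, h x⟩
  inj _ _ hxy := e.inj (congrArg Subtype.val hxy)
  pt_iff := e.pt_iff
  ln_iff := e.ln_iff
  inc_iff := e.inc_iff

lemma kFreeOn_range (e : IncEmbedding S T) (hS : KFree m n S) :
    T.KFreeOn m n (range e.toFun) := by
  intro P hP hPm hPpt
  by_contra! hle
  obtain ⟨L, hL, hLn⟩ := exists_subset_encard_eq hle
  obtain ⟨p, hp, rfl⟩ := exists_injective_fin_of_encard_eq hPm
  obtain ⟨l, hl, rfl⟩ := exists_injective_fin_of_encard_eq hLn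
  choose p' hp' using fun i => hP ⟨i, rfl⟩
  choose l' hl' using fun j => (hL ⟨j, rfl⟩).1
  refine hS ⟨p', l', fun i i' h => hp (by rw [← hp', ← hp', h]),
    fun j j' h => hl (by rw [← hl', ← hl', h]), fun i => ?_, fun j => ?_, fun i j => ?_⟩
  · exact (e.pt_iff _).1 (hp' i ▸ hPpt _ ⟨i, rfl⟩)
  · exact (e.ln_iff _).1 (hl' j ▸ (hL ⟨j, rfl⟩).2.1)
  · exact (e.inc_iff _ _).1 (hp' i ▸ hl' j ▸ (hL ⟨j, rfl⟩).2.2 _ ⟨i, rfl⟩)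

/-- The `n - 1` common lines of the points in `S` already account for all of those in `T`. -/
lemma ln_mem_range (hS : Complete m n S) (hT : Complete m n T) (e : IncEmbedding S T)
    {a : Fin m → M} (ha : Injective a) (hpt : ∀ i, S.pt (a i)) {y : N} (hy : T.ln y)
    (hinc : ∀ i, T.inc (e.toFun (a i)) y) : y ∈ range e.toFun := by
  obtain ⟨b, hb, hbln, hbinc, -⟩ := hS.2.1 a ha hpt
  obtain ⟨b', -, -, -, hb'all⟩ := hT.2.1 (e.toFun ∘ a) (e.inj.comp ha)
    fun i => (e.pt_iff _).2 (hpt i)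
  choose φ hφ using fun j => hb'all _ ((e.ln_iff _).2 (hbln j))
    fun i => (e.inc_iff _ _).2 (hbinc i j)
  have hφ_inj : Injective φ := fun j j' h => hb (e.inj (by rw [hφ, hφ, h]))
  obtain ⟨j', rfl⟩ := hb'all y hy hinc
  obtain ⟨j, rfl⟩ := Finite.surjective_of_injective hφ_inj j'
  exact ⟨b j, hφ j⟩

lemma pt_mem_range (hS : Complete m n S) (hT : Complete m n T) (e : IncEmbedding S T)
    {b : Fin n → M} (hb : Injective b) (hln : ∀ j, S.ln (b j)) {x : N} (hx : T.pt x)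
    (hinc : ∀ j, T.inc x (e.toFun (b j))) : x ∈ range e.toFun :=
  ln_mem_range hS.dual hT.dual e.dual hb hln hx hinc

end IncEmbedding

namespace FreeCompletion

/-- Elements of the free completion: those of the base structure, and lines (points) adjoined
at stage `k + 1`, numbered `j`, through the listed points (on the listed lines). -/
inductive Term (m n : ℕ) (β : Type u) : Type u
  | base : β → Term m n β
  | line : (Fin m → Term m n β) → ℕ → ℕ → Term m n β
  | point : (Fin n → Term m n β) → ℕ → ℕ → Term m n β

namespace Term

variable {m n : ℕ} {β : Type u} (T : IncidenceData β)

def supp : Term m n β → Set (Term m n β)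
  | base _ => ∅
  | line a _ _ => range a
  | point b _ _ => range b

def birth : Term m n β → ℕ
  | base _ => 0
  | line _ k _ => k + 1
  | point _ k _ => k + 1

def IsPt : Term m n β → Prop
  | base x => T.pt x
  | line .. => False
  | point .. => True

def IsLn : Term m n β → Prop
  | base x => T.ln x
  | line .. => True
  | point .. => False

def BaseInc : Term m n β → Term m n β → Prop
  | base x, base y => T.inc x y
  | _, _ => False

lemma BaseInc.mem_range_base {T : IncidenceData β} {x y : Term m n β} (h : BaseInc T x y) :
    x ∈ range base ∧ y ∈ range base := by
  cases x <;> cases y <;> first | exact ⟨⟨_, rfl⟩, ⟨_, rfl⟩⟩ | exact h.elim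

end Term

open Term

variable {m n : ℕ} {β : Type u} (T : IncidenceData β)

def incidence (m n : ℕ) : IncidenceData (Term m n β) where
  pt := IsPt T
  ln := IsLn T
  inc x y := IsPt T x ∧ IsLn T y ∧ (BaseInc T x y ∨ x ∈ y.supp ∨ y ∈ x.supp)
  pt_or_ln
    | base x => T.pt_or_ln x
    | line .. => Or.inr trivial
    | point .. => Or.inl trivial
  not_pt_and_ln
    | base x => T.not_pt_and_ln x
    | line .. => fun h => h.1
    | point .. => fun h => h.2
  inc_pt_ln _ _ h := ⟨h.1, h.2.1⟩

def baseEmbedding : IncEmbedding T (incidence T m n) where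
  toFun := base
  inj _ _ h := Term.base.inj h
  pt_iff _ := Iff.rfl
  ln_iff _ := Iff.rfl
  inc_iff x y := ⟨fun h => by simpa [BaseInc, supp] using h.2.2,
    fun h => ⟨(T.inc_pt_ln _ _ h).1, (T.inc_pt_ln _ _ h).2, Or.inl h⟩⟩

/-- The new lines of stage `k + 1`: for each `m`-set `P` of points of `s`, as many lines
through `P` as it lacks for having `n - 1` common lines. Listing `P` by its fixed enumeration
makes each of them one term, whatever the order of `P`. -/
def newLines (k : ℕ) (s : Set (Term m n β)) : Set (Term m n β) :=
  {y | ∃ P ⊆ s, (∀ x ∈ P, IsPt T x) ∧ ∃ (hP : P.encard = m) (j : ℕ),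
    j < n - 1 - ((incidence T m n).commonLines s P).ncard ∧ y = line (enumOfEncardEq hP) k j}

def newPoints (k : ℕ) (s : Set (Term m n β)) : Set (Term m n β) :=
  {x | ∃ L ⊆ s, (∀ y ∈ L, IsLn T y) ∧ ∃ (hL : L.encard = n) (i : ℕ),
    i < m - 1 - ((incidence T m n).commonPoints s L).ncard ∧ x = point (enumOfEncardEq hL) k i}

def stage : ℕ → Set (Term m n β)
  | 0 => range base
  | k + 1 => stage k ∪ newLines T k (stage k) ∪ newPoints T k (stage k)

lemma stage_subset_succ (k : ℕ) : stage (m := m) (n := n) T k ⊆ stage T (k + 1) :=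
  subset_union_left.trans subset_union_left

variable {T}

lemma birth_le_of_mem_stage {k : ℕ} {x : Term m n β} (hx : x ∈ stage T k) : x.birth ≤ k := by
  induction k generalizing x with
  | zero => obtain ⟨_, rfl⟩ := hx; rfl
  | succ k ih =>
    rcases hx with (hx | ⟨_, -, -, _, _, -, rfl⟩) | ⟨_, -, -, _, _, -, rfl⟩
    · exact (ih hx).trans k.le_succ
    all_goals exact le_rfl

lemma line_not_mem_stage {k j : ℕ} (a : Fin m → Term m n β) : line a k j ∉ stage T k :=
  fun h => (birth_le_of_mem_stage h).not_gt k.lt_succ_self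

lemma point_not_mem_stage {k i : ℕ} (b : Fin n → Term m n β) : point b k i ∉ stage T k :=
  fun h => (birth_le_of_mem_stage h).not_gt k.lt_succ_self

lemma supp_subset_of_mem_stage_succ {k : ℕ} {x : Term m n β} (hx : x ∈ stage T (k + 1)) :
    x.supp ⊆ stage T k := by
  rcases hx with (hx | ⟨P, hP, -, hPm, -, -, rfl⟩) | ⟨L, hL, -, hLn, -, -, rfl⟩
  · cases k with
    | zero => obtain ⟨_, rfl⟩ := hx; exact empty_subset _
    | succ k => exact (supp_subset_of_mem_stage_succ hx).trans (stage_subset_succ T k)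
  · exact (range_enumOfEncardEq hPm).trans_subset hP
  · exact (range_enumOfEncardEq hLn).trans_subset hL

lemma supp_subset_of_mem_stage {k : ℕ} {x : Term m n β} (hx : x ∈ stage T k) :
    x.supp ⊆ stage T k := by
  cases k with
  | zero => obtain ⟨_, rfl⟩ := hx; exact empty_subset _
  | succ k => exact (supp_subset_of_mem_stage_succ hx).trans (stage_subset_succ T k)

lemma inc_line_iff {k j : ℕ} {a : Fin m → Term m n β} {x : Term m n β}
    (hx : x ∈ stage T k) :
    (incidence T m n).inc x (line a k j) ↔ IsPt T x ∧ x ∈ range a := by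
  refine ⟨fun ⟨hpt, _, h⟩ => ⟨hpt, ?_⟩,
    fun ⟨hpt, hxa⟩ => ⟨hpt, trivial, Or.inr (Or.inl hxa)⟩⟩
  rcases h with h | h | h
  · obtain ⟨_, ⟨_, hb⟩⟩ := h.mem_range_base
    cases hb
  · exact h
  · exact absurd (supp_subset_of_mem_stage hx h) (line_not_mem_stage a)

lemma inc_point_iff {k i : ℕ} {b : Fin n → Term m n β} {y : Term m n β}
    (hy : y ∈ stage T k) :
    (incidence T m n).inc (point b k i) y ↔ IsLn T y ∧ y ∈ range b := by
  refine ⟨fun ⟨_, hln, h⟩ => ⟨hln, ?_⟩,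
    fun ⟨hln, hyb⟩ => ⟨trivial, hln, Or.inr (Or.inr hyb)⟩⟩
  rcases h with h | h | h
  · obtain ⟨⟨_, hb⟩, _⟩ := h.mem_range_base
    cases hb
  · exact absurd (supp_subset_of_mem_stage hy h) (point_not_mem_stage b)
  · exact h

lemma commonPoints_line {k j : ℕ} {P : Set (Term m n β)} (hPs : P ⊆ stage T k)
    (hPpt : ∀ x ∈ P, IsPt T x) (hPm : P.encard = m) :
    (incidence T m n).commonPoints (stage T k) {line (enumOfEncardEq hPm) k j} = P := by
  ext x
  simp only [IncidenceData.commonPoints, mem_singleton_iff, forall_eq, mem_ofPred_eq]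
  refine ⟨fun ⟨hx, _, hinc⟩ => range_enumOfEncardEq hPm ▸ ((inc_line_iff hx).1 hinc).2,
    fun hx => ⟨hPs hx, hPpt x hx, (inc_line_iff (hPs hx)).2 ⟨hPpt x hx, ?_⟩⟩⟩
  rwa [range_enumOfEncardEq]

lemma commonLines_point {k i : ℕ} {L : Set (Term m n β)} (hLs : L ⊆ stage T k)
    (hLln : ∀ y ∈ L, IsLn T y) (hLn : L.encard = n) :
    (incidence T m n).commonLines (stage T k) {point (enumOfEncardEq hLn) k i} = L := by
  ext y
  simp only [IncidenceData.commonLines, mem_singleton_iff, forall_eq, mem_ofPred_eq]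
  refine ⟨fun ⟨hy, _, hinc⟩ => range_enumOfEncardEq hLn ▸ ((inc_point_iff hy).1 hinc).2,
    fun hy => ⟨hLs hy, hLln y hy, (inc_point_iff (hLs hy)).2 ⟨hLln y hy, ?_⟩⟩⟩
  rwa [range_enumOfEncardEq]

lemma mem_newLines_of_isLn {k : ℕ} {y : Term m n β} (hy : y ∈ stage T (k + 1) \ stage T k)
    (hyln : IsLn T y) : y ∈ newLines T k (stage T k) := by
  rcases hy with ⟨(h | h) | ⟨_, -, -, _, _, -, rfl⟩, hk⟩
  exacts [absurd h hk, h, hyln.elim]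

lemma mem_newPoints_of_isPt {k : ℕ} {x : Term m n β} (hx : x ∈ stage T (k + 1) \ stage T k)
    (hxpt : IsPt T x) : x ∈ newPoints T k (stage T k) := by
  rcases hx with ⟨(h | ⟨_, -, -, _, _, -, rfl⟩) | h, hk⟩
  exacts [absurd h hk, hxpt.elim, h]

lemma setOf_new_isLn_eq {k : ℕ} {P : Set (Term m n β)} (hPs : P ⊆ stage T k)
    (hPpt : ∀ x ∈ P, IsPt T x) (hPm : P.encard = m) :
    {y | y ∈ stage T (k + 1) \ stage T k ∧ (incidence T m n).ln y ∧
        (incidence T m n).commonPoints (stage T k) {y} = P} =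
      (fun j => line (enumOfEncardEq hPm) k j) ''
        {j | j < n - 1 - ((incidence T m n).commonLines (stage T k) P).ncard} := by
  ext y
  constructor
  · rintro ⟨hy, hyln, hyP⟩
    obtain ⟨Q, hQs, hQpt, hQm, j, hj, rfl⟩ := mem_newLines_of_isLn hy hyln
    obtain rfl : Q = P := (commonPoints_line hQs hQpt hQm).symm.trans hyP
    exact ⟨j, hj, rfl⟩
  · rintro ⟨j, hj, rfl⟩
    exact ⟨⟨Or.inl (Or.inr ⟨P, hPs, hPpt, hPm, j, hj, rfl⟩), line_not_mem_stage _⟩,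
      trivial, commonPoints_line hPs hPpt hPm⟩

lemma setOf_new_isPt_eq {k : ℕ} {L : Set (Term m n β)} (hLs : L ⊆ stage T k)
    (hLln : ∀ y ∈ L, IsLn T y) (hLn : L.encard = n) :
    {x | x ∈ stage T (k + 1) \ stage T k ∧ (incidence T m n).pt x ∧
        (incidence T m n).commonLines (stage T k) {x} = L} =
      (fun i => point (enumOfEncardEq hLn) k i) ''
        {i | i < m - 1 - ((incidence T m n).commonPoints (stage T k) L).ncard} := by
  ext x
  constructor
  · rintro ⟨hx, hxpt, hxL⟩
    obtain ⟨Q, hQs, hQln, hQn, i, hi, rfl⟩ := mem_newPoints_of_isPt hx hxpt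
    obtain rfl : Q = L := (commonLines_point hQs hQln hQn).symm.trans hxL
    exact ⟨i, hi, rfl⟩
  · rintro ⟨i, hi, rfl⟩
    exact ⟨⟨Or.inr ⟨L, hLs, hLln, hLn, i, hi, rfl⟩, point_not_mem_stage _⟩, trivial,
      commonLines_point hLs hLln hLn⟩

lemma isFreeStep_stage {k : ℕ} (hk : (incidence T m n).KFreeOn m n (stage T k)) :
    (incidence T m n).IsFreeStep m n (stage T k) (stage T (k + 1)) where
  subset := stage_subset_succ T k
  not_inc x hx y hy hinc := by
    obtain ⟨L, hL, -, hLn, i, -, rfl⟩ := mem_newPoints_of_isPt hx hinc.1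
    obtain ⟨P, hP, -, hPm, j, -, rfl⟩ := mem_newLines_of_isLn hy hinc.2.1
    rcases hinc.2.2 with h | h | h
    · obtain ⟨⟨_, hb⟩, _⟩ := h.mem_range_base
      cases hb
    · exact point_not_mem_stage _ (hP ((range_enumOfEncardEq hPm).subset h))
    · exact line_not_mem_stage _ (hL ((range_enumOfEncardEq hLn).subset h))
  encard_commonPoints y hy hyln := by
    obtain ⟨P, hP, hPpt, hPm, j, -, rfl⟩ := mem_newLines_of_isLn hy hyln
    rw [commonPoints_line hP hPpt hPm, hPm]
  encard_commonLines x hx hxpt := by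
    obtain ⟨L, hL, hLln, hLn, i, -, rfl⟩ := mem_newPoints_of_isPt hx hxpt
    rw [commonLines_point hL hLln hLn, hLn]
  encard_newLines P hPs hPm hPpt := by
    rw [setOf_new_isLn_eq hPs hPpt hPm, Injective.encard_image (fun _ _ h => (line.inj h).2.2)]
    exact encard_add_encard_lt_sub_ncard (hk P hPs hPm hPpt)
  encard_newPoints L hLs hLn hLln := by
    rw [setOf_new_isPt_eq hLs hLln hLn, Injective.encard_image (fun _ _ h => (point.inj h).2.2)]
    exact encard_add_encard_lt_sub_ncard (hk.dual L hLs hLn hLln)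

lemma kFreeOn_stage (hT : KFree m n T) (k : ℕ) : (incidence T m n).KFreeOn m n (stage T k) := by
  induction k with
  | zero => exact (baseEmbedding T).kFreeOn_range hT
  | succ k ih => exact (isFreeStep_stage ih).kFreeOn ih

end FreeCompletion

theorem exists_complete_of_kFree {β : Type u} {T : IncidenceData β} {m n : ℕ}
    (hT : KFree m n T) :
    ∃ (D : Type u) (SD : IncidenceData D) (_ : IncEmbedding T SD), Complete m n SD := by
  open FreeCompletion in
  exact ⟨_, (incidence T m n).restrict_s6 (⋃ k, stage T k),
    (baseEmbedding T).codRestrict _ fun x => mem_iUnion.2 ⟨0, x, rfl⟩,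
    IncidenceData.complete_restrict_iUnion (fun k => isFreeStep_stage (kFreeOn_stage hT k))
      (kFreeOn_stage hT 0)⟩

section Amalgam

variable {m n : ℕ} {A B C : Type*} {SA : IncidenceData A} {SB : IncidenceData B}
  {SC : IncidenceData C}
  (f : IncEmbedding SA SB) (g : IncEmbedding SA SC)

open Classical in
/-- The image of `C` in `B ⊔_A C`, modelled as `B ⊕ (C \ g A)`. -/
noncomputable def toAmalgam (c : C) : B ⊕ {c : C // c ∉ range g.toFun} :=
  if h : c ∈ range g.toFun then .inl (f.toFun h.choose) else .inr ⟨c, h⟩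

lemma toAmalgam_apply (a : A) : toAmalgam f g (g.toFun a) = .inl (f.toFun a) := by
  have h : g.toFun a ∈ range g.toFun := mem_range_self a
  rw [toAmalgam, dif_pos h, g.inj h.choose_spec]

lemma inl_eq_toAmalgam_iff {b : B} {c : C} :
    .inl b = toAmalgam f g c ↔ ∃ a, b = f.toFun a ∧ c = g.toFun a := by
  refine ⟨fun h => ?_, fun ⟨a, hb, hc⟩ => by rw [hb, hc, toAmalgam_apply]⟩
  by_cases hc : c ∈ range g.toFun
  · obtain ⟨a, rfl⟩ := hc
    exact ⟨a, Sum.inl_injective (h.trans (toAmalgam_apply f g a)), rfl⟩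
  · rw [toAmalgam, dif_neg hc] at h
    cases h

lemma toAmalgam_injective : Injective (toAmalgam f g) := by
  intro c c' h
  by_cases hc : c ∈ range g.toFun
  · obtain ⟨a, rfl⟩ := hc
    obtain ⟨a', ha, rfl⟩ := (inl_eq_toAmalgam_iff f g).1 ((toAmalgam_apply f g a).symm.trans h)
    rw [f.inj ha]
  · by_cases hc' : c' ∈ range g.toFun
    · obtain ⟨a', rfl⟩ := hc'
      obtain ⟨a, -, rfl⟩ :=
        (inl_eq_toAmalgam_iff f g).1 ((toAmalgam_apply f g a').symm.trans h.symm)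
      exact absurd (mem_range_self a) hc
    · rw [toAmalgam, toAmalgam, dif_neg hc, dif_neg hc'] at h
      exact congrArg Subtype.val (Sum.inr_injective h)

lemma elim_toAmalgam (p : B → Prop) (q : C → Prop)
    (hpq : ∀ a, p (f.toFun a) ↔ q (g.toFun a))
    (c : C) : Sum.elim p (fun c' => q c'.1) (toAmalgam f g c) ↔ q c := by
  by_cases hc : c ∈ range g.toFun
  · obtain ⟨a, rfl⟩ := hc
    rw [toAmalgam_apply]
    exact hpq a
  · rw [toAmalgam, dif_neg hc]
    rfl

/-- The free amalgam of `B` and `C` over `A`. -/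
noncomputable def amalgam : IncidenceData (B ⊕ {c : C // c ∉ range g.toFun}) where
  pt := Sum.elim SB.pt fun c => SC.pt c.1
  ln := Sum.elim SB.ln fun c => SC.ln c.1
  inc x y := (∃ b b', x = .inl b ∧ y = .inl b' ∧ SB.inc b b') ∨
    ∃ c c', x = toAmalgam f g c ∧ y = toAmalgam f g c' ∧ SC.inc c c'
  pt_or_ln
    | .inl b => SB.pt_or_ln b
    | .inr c => SC.pt_or_ln c.1
  not_pt_and_ln
    | .inl b => SB.not_pt_and_ln b
    | .inr c => SC.not_pt_and_ln c.1
  inc_pt_ln := by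
    rintro _ _ (⟨b, b', rfl, rfl, h⟩ | ⟨c, c', rfl, rfl, h⟩)
    · exact SB.inc_pt_ln b b' h
    · exact ⟨(elim_toAmalgam f g _ _ (fun a => (f.pt_iff a).trans (g.pt_iff a).symm) c).2
        (SC.inc_pt_ln c c' h).1,
        (elim_toAmalgam f g _ _ (fun a => (f.ln_iff a).trans (g.ln_iff a).symm) c').2
        (SC.inc_pt_ln c c' h).2⟩

noncomputable def amalgamLeft : IncEmbedding SB (amalgam f g) where
  toFun := .inl
  inj := Sum.inl_injective
  pt_iff _ := Iff.rfl
  ln_iff _ := Iff.rfl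
  inc_iff b b' := by
    refine ⟨?_, fun h => Or.inl ⟨b, b', rfl, rfl, h⟩⟩
    rintro (⟨_, _, h₁, h₂, h⟩ | ⟨c, c', h₁, h₂, h⟩)
    · rwa [Sum.inl_injective h₁, Sum.inl_injective h₂]
    · obtain ⟨a, rfl, rfl⟩ := (inl_eq_toAmalgam_iff f g).1 h₁
      obtain ⟨a', rfl, rfl⟩ := (inl_eq_toAmalgam_iff f g).1 h₂
      exact (f.inc_congr g a a').2 h

noncomputable def amalgamRight : IncEmbedding SC (amalgam f g) where
  toFun := toAmalgam f g
  inj := toAmalgam_injective f g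
  pt_iff := elim_toAmalgam f g _ _ fun a => (f.pt_iff a).trans (g.pt_iff a).symm
  ln_iff := elim_toAmalgam f g _ _ fun a => (f.ln_iff a).trans (g.ln_iff a).symm
  inc_iff c c' := by
    refine ⟨?_, fun h => Or.inr ⟨c, c', rfl, rfl, h⟩⟩
    rintro (⟨b, b', h₁, h₂, h⟩ | ⟨_, _, h₁, h₂, h⟩)
    · obtain ⟨a, rfl, rfl⟩ := (inl_eq_toAmalgam_iff f g).1 h₁.symm
      obtain ⟨a', rfl, rfl⟩ := (inl_eq_toAmalgam_iff f g).1 h₂.symm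
      exact (f.inc_congr g a a').1 h
    · rwa [toAmalgam_injective f g h₁, toAmalgam_injective f g h₂]

lemma amalgamLeft_apply (a : A) :
    (amalgamLeft f g).toFun (f.toFun a) = (amalgamRight f g).toFun (g.toFun a) :=
  (toAmalgam_apply f g a).symm

lemma range_amalgamLeft_inter_range_amalgamRight :
    range (amalgamLeft f g).toFun ∩ range (amalgamRight f g).toFun =
      (amalgamLeft f g).toFun '' range f.toFun := by
  refine Subset.antisymm ?_ ?_
  · rintro _ ⟨⟨b, rfl⟩, c, hc⟩
    obtain ⟨a, rfl, -⟩ := (inl_eq_toAmalgam_iff f g).1 hc.symm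
    exact mem_image_of_mem _ (mem_range_self a)
  · rintro _ ⟨_, ⟨a, rfl⟩, rfl⟩
    exact ⟨mem_range_self _, g.toFun a, (amalgamLeft_apply f g a).symm⟩

lemma amalgam_inc_mem_range {x y : B ⊕ {c : C // c ∉ range g.toFun}}
    (h : (amalgam f g).inc x y) :
    (x ∈ range (amalgamLeft f g).toFun ∧ y ∈ range (amalgamLeft f g).toFun) ∨
      (x ∈ range (amalgamRight f g).toFun ∧ y ∈ range (amalgamRight f g).toFun) := by
  rcases h with ⟨b, b', rfl, rfl, -⟩ | ⟨c, c', rfl, rfl, -⟩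
  exacts [Or.inl ⟨mem_range_self b, mem_range_self b'⟩,
    Or.inr ⟨mem_range_self c, mem_range_self c'⟩]

lemma exists_eq_amalgamRight_of_not_mem {x : B ⊕ {c : C // c ∉ range g.toFun}}
    (hx : x ∉ range (amalgamLeft f g).toFun) :
    ∃ c ∉ range g.toFun, x = (amalgamRight f g).toFun c := by
  rcases x with b | ⟨c, hc⟩
  · exact absurd (mem_range_self b) hx
  · refine ⟨c, hc, ?_⟩
    simp only [amalgamRight, toAmalgam, dif_neg hc]

lemma exists_eq_amalgamRight_of_mem_inter {x : B ⊕ {c : C // c ∉ range g.toFun}}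
    (hL : x ∈ range (amalgamLeft f g).toFun) (hR : x ∈ range (amalgamRight f g).toFun) :
    ∃ a, x = (amalgamRight f g).toFun (g.toFun a) := by
  obtain ⟨b, rfl⟩ := hL
  obtain ⟨c, hc⟩ := hR
  obtain ⟨a, -, rfl⟩ := (inl_eq_toAmalgam_iff f g).1 hc.symm
  exact ⟨a, hc.symm⟩

lemma false_of_pt_not_mem_range_amalgamLeft (hA : Complete m n SA) (hC : Complete m n SC)
    {x : B ⊕ {c : C // c ∉ range g.toFun}} (hx : x ∉ range (amalgamLeft f g).toFun)
    (hxpt : (amalgam f g).pt x) {l : Fin n → B ⊕ {c : C // c ∉ range g.toFun}}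
    (hl : Injective l) (hln : ∀ j, (amalgam f g).ln (l j))
    (hlL : ∀ j, l j ∈ range (amalgamLeft f g).toFun)
    (hlR : ∀ j, l j ∈ range (amalgamRight f g).toFun)
    (hinc : ∀ j, (amalgam f g).inc x (l j)) : False := by
  obtain ⟨c, hc, rfl⟩ := exists_eq_amalgamRight_of_not_mem f g hx
  choose a ha using fun j => exists_eq_amalgamRight_of_mem_inter f g (hlL j) (hlR j)
  refine hc (g.pt_mem_range hA hC (b := a) (fun j j' h => hl (by rw [ha, ha, h])) (fun j => ?_)
    (((amalgamRight f g).pt_iff c).1 hxpt) fun j => ?_)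
  · exact (g.ln_iff _).1 (((amalgamRight f g).ln_iff _).1 (ha j ▸ hln j))
  · exact ((amalgamRight f g).inc_iff _ _).1 (ha j ▸ hinc j)

lemma false_of_ln_not_mem_range_amalgamLeft (hA : Complete m n SA) (hC : Complete m n SC)
    {y : B ⊕ {c : C // c ∉ range g.toFun}} (hy : y ∉ range (amalgamLeft f g).toFun)
    (hyln : (amalgam f g).ln y) {p : Fin m → B ⊕ {c : C // c ∉ range g.toFun}}
    (hp : Injective p) (hpt : ∀ i, (amalgam f g).pt (p i))
    (hpL : ∀ i, p i ∈ range (amalgamLeft f g).toFun)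
    (hpR : ∀ i, p i ∈ range (amalgamRight f g).toFun)
    (hinc : ∀ i, (amalgam f g).inc (p i) y) : False := by
  obtain ⟨c, hc, rfl⟩ := exists_eq_amalgamRight_of_not_mem f g hy
  choose a ha using fun i => exists_eq_amalgamRight_of_mem_inter f g (hpL i) (hpR i)
  refine hc (g.ln_mem_range hA hC (a := a) (fun i i' h => hp (by rw [ha, ha, h])) (fun i => ?_)
    (((amalgamRight f g).ln_iff c).1 hyln) fun i => ?_)
  · exact (g.pt_iff _).1 (((amalgamRight f g).pt_iff _).1 (ha i ▸ hpt i))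
  · exact ((amalgamRight f g).inc_iff _ _).1 (ha i ▸ hinc i)

theorem kFree_amalgam (hA : Complete m n SA) (hB : Complete m n SB) (hC : Complete m n SC) :
    KFree m n (amalgam f g) := by
  rintro ⟨p, l, hp, hl, hpt, hln, hinc⟩
  have sides := fun i j => amalgam_inc_mem_range f g (hinc i j)
  by_cases hLall : (∀ i, p i ∈ range (amalgamLeft f g).toFun) ∧
      ∀ j, l j ∈ range (amalgamLeft f g).toFun
  · exact ((amalgamLeft f g).kFreeOn_range hB.1).not_forall_inc hp hl hLall.1 hLall.2 hpt hln
      hinc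
  by_cases hRall : (∀ i, p i ∈ range (amalgamRight f g).toFun) ∧
      ∀ j, l j ∈ range (amalgamRight f g).toFun
  · exact ((amalgamRight f g).kFreeOn_range hC.1).not_forall_inc hp hl hRall.1 hRall.2 hpt hln
      hinc
  simp only [not_and_or, not_forall] at hLall hRall
  rcases hLall with ⟨i, hi⟩ | ⟨j, hj⟩
  · have hlR j : l j ∈ range (amalgamRight f g).toFun :=
      ((sides i j).resolve_left fun h => hi h.1).2
    obtain ⟨i', hi'⟩ := hRall.resolve_right fun ⟨j, hj⟩ => hj (hlR j)
    exact false_of_pt_not_mem_range_amalgamLeft f g hA hC hi (hpt i) hl hln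
      (fun j => ((sides i' j).resolve_right fun h => hi' h.1).2) hlR (hinc i)
  · have hpR i : p i ∈ range (amalgamRight f g).toFun :=
      ((sides i j).resolve_left fun h => hj h.2).1
    obtain ⟨j', hj'⟩ := hRall.resolve_left fun ⟨i, hi⟩ => hi (hpR i)
    exact false_of_ln_not_mem_range_amalgamLeft f g hA hC hj (hln j) hp hpt
      (fun i => ((sides i j').resolve_right fun h => hj' h.2).1) hpR (hinc · j)

end Amalgam

theorem statement_6_general (m n : ℕ)
    {A B C : Type u} (SA : IncidenceData A) (SB : IncidenceData B) (SC : IncidenceData C)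
    (hA : Complete m n SA) (hB : Complete m n SB) (hC : Complete m n SC)
    (f : IncEmbedding SA SB) (g : IncEmbedding SA SC) :
    ∃ (D : Type u) (SD : IncidenceData D)
      (f' : IncEmbedding SB SD) (g' : IncEmbedding SC SD),
      Complete m n SD ∧
      (∀ a, f'.toFun (f.toFun a) = g'.toFun (g.toFun a)) ∧
      Set.range f'.toFun ∩ Set.range g'.toFun = f'.toFun '' Set.range f.toFun := by
  obtain ⟨D, SD, e, hD⟩ := exists_complete_of_kFree (kFree_amalgam f g hA hB hC)
  refine ⟨D, SD, (amalgamLeft f g).comp e, (amalgamRight f g).comp e, hD,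
    fun a => congrArg e.toFun (amalgamLeft_apply f g a), ?_⟩
  simp only [IncEmbedding.comp, range_comp, ← image_inter e.inj,
    range_amalgamLeft_inter_range_amalgamRight, image_comp]

/-- The class `T^c_{m,n}` has the disjoint amalgamation property. -/
theorem statement_6 (m n : ℕ) (hm : 1 ≤ m) (hn : 1 ≤ n)
    {A B C : Type u} (SA : IncidenceData A) (SB : IncidenceData B) (SC : IncidenceData C)
    (hA : Complete m n SA) (hB : Complete m n SB) (hC : Complete m n SC)
    (f : IncEmbedding SA SB) (g : IncEmbedding SA SC) :
    ∃ (D : Type u) (SD : IncidenceData D)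
      (f' : IncEmbedding SB SD) (g' : IncEmbedding SC SD),
      Complete m n SD ∧
      (∀ a, f'.toFun (f.toFun a) = g'.toFun (g.toFun a)) ∧
      Set.range f'.toFun ∩ Set.range g'.toFun = f'.toFun '' Set.range f.toFun :=
  statement_6_general m n SA SB SC hA hB hC f g
end

section
/- Let m, n ≥ 1, let M be a member of T^c_{m,n}, and let A ⊆ M. Then the I-closure cl_M(A) of A in M, with its induced structure, is again a member of T^c_{m,n}, and cl_M(A) is contained in every subset N of M that contains A and whose induced structure is a member of T^c_{m,n}. In particular, cl_M(A) is the smallest induced substructure of M containing A that belongs to T^c_{m,n}. -/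
universe u v

/-- A subset `Y` is `I`-closed: whenever `m` pairwise distinct points of `Y` are all
incident to an element `y` of `M`, then `y ∈ Y`, and dually for `n` pairwise distinct
lines of `Y`. -/
def IClosedD (m n : ℕ) {M : Type u} (S : IncidenceData M) (Y : Set M) : Prop :=
  (∀ (a : Fin m → M) (y : M), Function.Injective a → (∀ i, S.pt (a i)) →
    (∀ i, a i ∈ Y) → (∀ i, S.inc (a i) y) → y ∈ Y) ∧
  (∀ (b : Fin n → M) (x : M), Function.Injective b → (∀ j, S.ln (b j)) →
    (∀ j, b j ∈ Y) → (∀ j, S.inc x (b j)) → x ∈ Y)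

/-- The `I`-closure of `A` in `M`: the smallest `I`-closed subset containing `A`. -/
def iclD (m n : ℕ) {M : Type u} (S : IncidenceData M) (A : Set M) : Set M :=
  ⋂₀ {Y : Set M | IClosedD m n S Y ∧ A ⊆ Y}

/-- Auxiliary: a closed subset of a complete structure is complete. -/
lemma restrict_complete (m n : ℕ) {M : Type u} (S : IncidenceData M)
    (hS : Complete m n S) (C : Set M) (hC : IClosedD m n S C) :
    Complete m n (S.restrict C) := by
  obtain ⟨hKF, hP, hL⟩ := hS
  refine ⟨?_, ?_, ?_⟩
  · rintro ⟨a, b, ha, hb, hpa, hlb, hinc⟩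
    exact hKF ⟨fun i => (a i).1, fun j => (b j).1,
      fun i i' h => ha (Subtype.ext h), fun j j' h => hb (Subtype.ext h),
      hpa, hlb, hinc⟩
  · intro a ha hpa
    obtain ⟨b, hb, hlb, hinc, huniq⟩ := hP (fun i => (a i).1)
      (fun i i' h => ha (Subtype.ext h)) hpa
    have hbC : ∀ j, b j ∈ C := fun j =>
      hC.1 (fun i => (a i).1) (b j) (fun i i' h => ha (Subtype.ext h)) hpa
        (fun i => (a i).2) (fun i => hinc i j)
    refine ⟨fun j => ⟨b j, hbC j⟩, fun j j' h => hb (congrArg Subtype.val h),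
      hlb, hinc, ?_⟩
    intro y hy hincy
    obtain ⟨j, hj⟩ := huniq y.1 hy hincy
    exact ⟨j, Subtype.ext hj⟩
  · intro b hb hlb
    obtain ⟨a, ha, hpa, hinc, huniq⟩ := hL (fun j => (b j).1)
      (fun j j' h => hb (Subtype.ext h)) hlb
    have haC : ∀ i, a i ∈ C := fun i =>
      hC.2 (fun j => (b j).1) (a i) (fun j j' h => hb (Subtype.ext h)) hlb
        (fun j => (b j).2) (fun j => hinc i j)
    refine ⟨fun i => ⟨a i, haC i⟩, fun i i' h => ha (congrArg Subtype.val h),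
      hpa, hinc, ?_⟩
    intro x hx hincx
    obtain ⟨i, hi⟩ := huniq x.1 hx hincx
    exact ⟨i, Subtype.ext hi⟩

/-- Auxiliary: a subset whose restriction is complete is closed. -/
lemma complete_closed (m n : ℕ) (hm : 1 ≤ m) (hn : 1 ≤ n) {M : Type u} (S : IncidenceData M)
    (hS : Complete m n S) (N : Set M) (hN : Complete m n (S.restrict N)) :
    IClosedD m n S N := by
  constructor
  · intro a y ha hpa haN hinc
    obtain ⟨bN, hbN, hlbN, hincN, _⟩ := hN.2.1 (fun i => ⟨a i, haN i⟩)
      (fun i i' h => ha (congrArg Subtype.val h)) hpa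
    obtain ⟨bS, hbS, hlbS, hincS, huniqS⟩ := hS.2.1 a ha hpa
    have key : ∀ j, ∃ k, (bN j).1 = bS k := fun j =>
      huniqS (bN j).1 (hlbN j) (fun i => hincN i j)
    choose f hf using key
    have hfinj : Function.Injective f := by
      intro j j' h
      apply hbN; apply Subtype.ext
      rw [hf j, hf j', h]
    have hfsurj : Function.Surjective f :=
      Finite.injective_iff_surjective.mp hfinj
    have hly : S.ln y := (S.inc_pt_ln _ _ (hinc ⟨0, hm⟩)).2
    obtain ⟨k, hk⟩ := huniqS y hly hinc
    obtain ⟨j, hj⟩ := hfsurj k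
    have : y = (bN j).1 := by rw [hk, ← hj, ← hf j]
    exact this ▸ (bN j).2
  · intro b x hb hlb hbN hinc
    obtain ⟨aN, haN, hpaN, hincN, _⟩ := hN.2.2 (fun j => ⟨b j, hbN j⟩)
      (fun j j' h => hb (congrArg Subtype.val h)) hlb
    obtain ⟨aS, haS, hpaS, hincS, huniqS⟩ := hS.2.2 b hb hlb
    have key : ∀ i, ∃ k, (aN i).1 = aS k := fun i =>
      huniqS (aN i).1 (hpaN i) (fun j => hincN i j)
    choose f hf using key
    have hfinj : Function.Injective f := by
      intro i i' h
      apply haN; apply Subtype.ext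
      rw [hf i, hf i', h]
    have hfsurj : Function.Surjective f :=
      Finite.injective_iff_surjective.mp hfinj
    have hpx : S.pt x := (S.inc_pt_ln _ _ (hinc ⟨0, hn⟩)).1
    obtain ⟨k, hk⟩ := huniqS x hpx hinc
    obtain ⟨j, hj⟩ := hfsurj k
    have : x = (aN j).1 := by rw [hk, ← hj, ← hf j]
    exact this ▸ (aN j).2

/-- If `M ∈ T^c_{m,n}` and `A ⊆ M`, then the `I`-closure of `A` in `M`, with its induced
structure, is again a member of `T^c_{m,n}`, and it is contained in every subset of `M`
containing `A` whose induced structure is a member of `T^c_{m,n}`. -/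
theorem statement_7 (m n : ℕ) (hm : 1 ≤ m) (hn : 1 ≤ n)
    {M : Type u} (S : IncidenceData M) (hS : Complete m n S) (A : Set M) :
    Complete m n (S.restrict (iclD m n S A)) ∧
      ∀ N : Set M, A ⊆ N → Complete m n (S.restrict N) → iclD m n S A ⊆ N := by
  have hCclosed : IClosedD m n S (iclD m n S A) := by
    constructor
    · intro a y ha hpa haC hinc Y hY
      exact hY.1.1 a y ha hpa (fun i => haC i Y hY) hinc
    · intro b x hb hlb hbC hinc Y hY
      exact hY.1.2 b x hb hlb (fun j => hbC j Y hY) hinc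
  refine ⟨restrict_complete m n S hS _ hCclosed, fun N hAN hNc => ?_⟩
  exact Set.sInter_subset_of_mem ⟨complete_closed m n hm hn S hS N hNc, hAN⟩
end
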